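/- arXiv:1604.02555 — 12 statements merged into one kernel-verified Lean document; each statement's English description precedes it below -/
import Mathlib

section
/- Let X be a paracompact, first-countable Tychonoff space such that C_k(X) is an angelic space. Then X is Lindelöf. -/
open Set Filter Topology Uniformity

/-- `X` has a G-base of neighborhoods at the point `x`: a neighborhood base
`{U_α : α ∈ ℕ^ℕ}` with `U_β ⊆ U_α` whenever `α ≤ β` (pointwise order). -/
def GBaseAt (X : Type*) [TopologicalSpace X] (x : X) : Prop :=
  ∃ U : (ℕ → ℕ) → Set X,
    (∀ α, U α ∈ nhds x) ∧
    (∀ α β : ℕ → ℕ, α ≤ β → U β ⊆ U α) ∧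
    (∀ V ∈ nhds x, ∃ α, U α ⊆ V)

/-- `X` has a G-base if it has a G-base at each point. -/
def HasGBase (X : Type*) [TopologicalSpace X] : Prop :=
  ∀ x : X, GBaseAt X x

/-- `X` is an Ascoli space: for every compact `K ⊆ C_k(X)` the evaluation map
`K × X → ℝ` is continuous.  Here `C(X, ℝ)` carries the compact-open topology. -/
def AscoliSpace (X : Type*) [TopologicalSpace X] : Prop :=
  ∀ K : Set C(X, ℝ), IsCompact K →
    Continuous fun p : K × X => (p.1 : C(X, ℝ)) p.2

/-- `{K_α : α ∈ ℕ^ℕ}` is a compact resolution of `Z`: a cover of `Z` by compact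
sets with `K_α ⊆ K_β` whenever `α ≤ β`. -/
def CompactResolution (Z : Type*) [TopologicalSpace Z] (K : (ℕ → ℕ) → Set Z) : Prop :=
  (∀ α, IsCompact (K α)) ∧ (⋃ α, K α) = Set.univ ∧
    ∀ α β : ℕ → ℕ, α ≤ β → K α ⊆ K β

/-- `Z` has a compact resolution swallowing the compact sets of `Z`. -/
def CompactResolutionSwallowing (Z : Type*) [TopologicalSpace Z] : Prop :=
  ∃ K : (ℕ → ℕ) → Set Z, CompactResolution Z K ∧
    ∀ C : Set Z, IsCompact C → ∃ α, C ⊆ K α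

/-- `A` is functionally bounded in `Z`: every continuous real function on `Z`
is bounded on `A`. -/
def FunctionallyBounded (Z : Type*) [TopologicalSpace Z] (A : Set Z) : Prop :=
  ∀ f : C(Z, ℝ), ∃ M : ℝ, ∀ x ∈ A, |f x| ≤ M

/-- `Z` has a functionally bounded resolution. -/
def FunctionallyBoundedResolution (Z : Type*) [TopologicalSpace Z] : Prop :=
  ∃ A : (ℕ → ℕ) → Set Z,
    (⋃ α, A α) = Set.univ ∧
    (∀ α β : ℕ → ℕ, α ≤ β → A α ⊆ A β) ∧
    ∀ α, FunctionallyBounded Z (A α)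

/-- `Z` is angelic: every relatively countably compact set is relatively compact,
and every point of the closure of a relatively compact set is a limit of a
sequence of the set. -/
def Angelic (Z : Type*) [TopologicalSpace Z] : Prop :=
  (∀ A : Set Z,
      (∀ u : ℕ → Z, (∀ n, u n ∈ A) → ∃ z : Z, MapClusterPt z Filter.atTop u) →
      IsCompact (closure A)) ∧
  (∀ A : Set Z, IsCompact (closure A) → ∀ z ∈ closure A,
      ∃ u : ℕ → Z, (∀ n, u n ∈ A) ∧ Filter.Tendsto u Filter.atTop (nhds z))

/-- A uniformity `u` on the topological space `X` is Ascoli: it induces the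
topology of `X` and every compact subset of `C_k(X)` is uniformly
equicontinuous with respect to `u`. -/
def IsAscoliUniformity (X : Type*) [t : TopologicalSpace X] (u : UniformSpace X) : Prop :=
  u.toTopologicalSpace = t ∧
  ∀ K : Set C(X, ℝ), IsCompact K → ∀ ε : ℝ, 0 < ε →
    ∃ U ∈ 𝓤[u], ∀ f ∈ K, ∀ p : X × X, p ∈ U → |f p.1 - f p.2| < ε

/-- The uniformity `u` has a G-base of entourages. -/
def UniformityHasGBase (X : Type*) (u : UniformSpace X) : Prop :=
  ∃ U : (ℕ → ℕ) → Set (X × X),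
    (∀ α, U α ∈ 𝓤[u]) ∧
    (∀ α β : ℕ → ℕ, α ≤ β → U β ⊆ U α) ∧
    ∀ V ∈ 𝓤[u], ∃ α, U α ⊆ V

/-- `X` is of `ℕ^ℕ`-uniformly compact type: for every compact `K ⊆ X` the
diagonal `Δ_K` has an `ℕ^ℕ`-decreasing base of open neighborhoods in `X × X`. -/
def UniformlyCompactType (X : Type*) [TopologicalSpace X] : Prop :=
  ∀ K : Set X, IsCompact K →
    ∃ U : (ℕ → ℕ) → Set (X × X),
      (∀ α, IsOpen (U α) ∧ (fun x => (x, x)) '' K ⊆ U α) ∧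
      (∀ α β : ℕ → ℕ, α ≤ β → U β ⊆ U α) ∧
      ∀ V : Set (X × X), IsOpen V → (fun x => (x, x)) '' K ⊆ V → ∃ α, U α ⊆ V

/-- A topological space is analytic if it is a continuous image of `ℕ^ℕ`. -/
def AnalyticSpace (Z : Type*) [TopologicalSpace Z] : Prop :=
  ∃ f : (ℕ → ℕ) → Z, Continuous f ∧ Function.Surjective f

theorem statement0' (X : Type*) [TopologicalSpace X] [T35Space X]
    [ParacompactSpace X] [FirstCountableTopology X]
    (h : (∀ A : Set C(X,ℝ),
      (∀ u : ℕ → C(X,ℝ), (∀ n, u n ∈ A) → ∃ z, MapClusterPt z Filter.atTop u) →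
      IsCompact (closure A)) ∧
   (∀ A : Set C(X,ℝ), IsCompact (closure A) → ∀ z ∈ closure A,
      ∃ u : ℕ → C(X,ℝ), (∀ n, u n ∈ A) ∧ Filter.Tendsto u Filter.atTop (nhds z))) :
    LindelofSpace X := by
  refine ⟨isLindelof_iff_countable_subcover.mpr ?_⟩
  intro ι U hUo hU
  by_contra hns
  push_neg at hns
  obtain ⟨v, hvo, hvU, hvlf, hvsub⟩ := precise_refinement U hUo (univ_subset_iff.mp hU)
  -- no countable subcover of v
  have hnsv : ∀ t : Set ι, t.Countable → ¬ (univ : Set X) ⊆ ⋃ i ∈ t, v i := by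
    intro t ht hsub
    exact hns t ht (hsub.trans (iUnion₂_mono fun i _ => hvsub i))
  -- the set of indices with nonempty v i is uncountable
  set T : Set ι := {i | (v i).Nonempty} with hT
  have hTnc : ¬ T.Countable := by
    intro hTc
    refine hnsv T hTc (fun x _ => ?_)
    have : x ∈ ⋃ i, v i := hvU ▸ mem_univ x
    obtain ⟨i, hi⟩ := mem_iUnion.mp this
    exact mem_biUnion ⟨x, hi⟩ hi
  -- choose a point in each nonempty v i
  have hex : ∀ i : T, ∃ x, x ∈ v i := fun i => i.2
  choose c hc using hex
  -- D = image of c, is uncountable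
  set D : Set X := range c with hD
  have hDnc : ¬ D.Countable := by
    intro hDc
    apply hTnc
    have hsubT : T ⊆ ⋃ x ∈ D, {i : ι | x ∈ v i} := by
      intro i hi
      exact mem_biUnion (mem_range_self (⟨i, hi⟩ : T)) (hc ⟨i, hi⟩)
    have : (⋃ x ∈ D, {i : ι | x ∈ v i}).Countable :=
      hDc.biUnion (fun x _ => (hvlf.point_finite x).countable)
    exact this.mono hsubT
  -- for each d ∈ D choose an index j d with c (j d) = d
  have hex2 : ∀ d : D, ∃ i : T, c i = d := fun d => d.2
  choose j hj using hex2
  have hjinj : Function.Injective j := by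
    intro d d' hdd'
    apply Subtype.ext
    rw [← hj d, ← hj d', hdd']
  have hdv : ∀ d : D, (d : X) ∈ v (j d) := fun d => hj d ▸ hc (j d)
  -- D is "closed discrete": every point has a nbhd meeting D in a finite set
  have hDdisc : ∀ x : X, ∃ N ∈ 𝓝 x, (N ∩ D).Finite := by
    intro x
    obtain ⟨N, hN, hNfin⟩ := hvlf x
    refine ⟨N, hN, ?_⟩
    have hsub2 : N ∩ D ⊆ (fun i : T => (c i : X)) '' {i : T | (v (i : ι) ∩ N).Nonempty} := by
      rintro y ⟨hyN, hyD⟩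
      exact ⟨j ⟨y, hyD⟩, ⟨y, hdv ⟨y, hyD⟩, hyN⟩, hj ⟨y, hyD⟩⟩
    refine Finite.subset (Finite.image _ ?_) hsub2
    exact hNfin.preimage_embedding (Function.Embedding.subtype _)
  -- every subset of D is closed
  have hsub_closed : ∀ S : Set X, S ⊆ D → IsClosed S := by
    intro S hS
    rw [← closure_subset_iff_isClosed]
    intro x hx
    obtain ⟨N, hN, hNfin⟩ := hDdisc x
    have hF : (N ∩ S).Finite := hNfin.subset (inter_subset_inter_right _ hS)
    by_contra hxS
    have hxF : x ∉ N ∩ S := fun hh => hxS hh.2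
    have hco : (N ∩ S)ᶜ ∈ 𝓝 x := (hF.isClosed.isOpen_compl).mem_nhds hxF
    have hmem : N ∩ (N ∩ S)ᶜ ∈ 𝓝 x := inter_mem hN hco
    obtain ⟨y, hy, hyS⟩ := mem_closure_iff_nhds.mp hx _ hmem
    exact hy.2 ⟨hy.1, hyS⟩
  -- Urysohn functions
  have hex3 : ∀ d : D, ∃ f : X → ℝ, Continuous f ∧ f d = 1 ∧
      ∀ x, x ∈ (v (j d))ᶜ ∪ (D \ {(d : X)}) → f x = 0 := by
    intro d
    have hKc : IsClosed ((v (j d))ᶜ ∪ (D \ {(d : X)})) := by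
      refine IsClosed.union (isClosed_compl_iff.mpr (hvo _)) ?_
      exact hsub_closed _ diff_subset
    have hdK : (d : X) ∉ (v (j d))ᶜ ∪ (D \ {(d : X)}) := by
      rintro (hh | hh)
      · exact hh (hdv d)
      · exact hh.2 rfl
    obtain ⟨g, hgc, hgd, hgK⟩ := CompletelyRegularSpace.completely_regular (d : X) _ hKc hdK
    refine ⟨fun x => 1 - (g x : ℝ), by fun_prop, by simp [hgd], fun x hx => by simp [hgK hx]⟩
  choose f hfc hfd hf0 using hex3
  -- supports are locally finite
  have hfsupp : ∀ d : D, Function.support (f d) ⊆ v (j d) := by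
    intro d x hx
    by_contra hxv
    exact hx (hf0 d x (Or.inl hxv))
  have hsupp : LocallyFinite fun d : D => Function.support (f d) :=
    (hvlf.comp_injective (Subtype.val_injective.comp hjinj)).subset hfsupp
  -- the sums
  have hGc : ∀ S : Set D, Continuous fun x => ∑ᶠ d ∈ S, f d x :=
    fun S => continuous_finsum_cond (fun d _ => hfc d) hsupp
  set G : Set D → C(X, ℝ) := fun S => ⟨fun x => ∑ᶠ d ∈ S, f d x, hGc S⟩ with hG
  have hGapp : ∀ (S : Set D) (x : X), G S x = ∑ᶠ d ∈ S, f d x := fun _ _ => rfl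
  -- key comparison lemma
  have hGeq : ∀ (S S' : Set D) (x : X),
      (∀ d : D, f d x ≠ 0 → (d ∈ S ↔ d ∈ S')) → G S x = G S' x := by
    intro S S' x hss
    exact finsum_mem_inter_support_eq' (fun d : D => f d x) S S' hss
  -- the family of finite sums
  set A₀ : Set C(X, ℝ) := {g | ∃ F : Set D, F.Finite ∧ g = G F} with hA₀
  -- for a compact K, only finitely many supports meet it
  have hDKfin : ∀ K : Set X, IsCompact K →
      {d : D | (Function.support (f d) ∩ K).Nonempty}.Finite :=
    fun K hK => hsupp.finite_nonempty_inter_compact hK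
  -- Step A : every sequence in A₀ has a cluster point
  have stepA : ∀ u : ℕ → C(X, ℝ), (∀ n, u n ∈ A₀) → ∃ z, MapClusterPt z Filter.atTop u := by
    intro u hu
    choose F hFfin hFu using fun n => hu n
    set 𝒰 : Ultrafilter ℕ := Ultrafilter.of atTop with h𝒰
    set S : Set D := {d | {n | d ∈ F n} ∈ 𝒰} with hS
    have htend : Tendsto u (𝒰 : Filter ℕ) (𝓝 (G S)) := by
      rw [ContinuousMap.tendsto_iff_forall_isCompact_tendstoUniformlyOn]
      intro K hK
      have hEq : ∀ᶠ n in (𝒰 : Filter ℕ), ∀ x ∈ K, u n x = G S x := by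
        have hmem : (⋂ d ∈ {d : D | (Function.support (f d) ∩ K).Nonempty},
            {n : ℕ | d ∈ F n ↔ d ∈ S}) ∈ (𝒰 : Filter ℕ) := by
          rw [Filter.biInter_mem (hDKfin K hK)]
          intro d _
          by_cases hdS : d ∈ S
          · exact Filter.mem_of_superset (Ultrafilter.mem_coe.mpr hdS)
              (fun n hn => by simp only [mem_setOf_eq] at hn ⊢; exact iff_of_true hn hdS)
          · have hcm : {n : ℕ | d ∈ F n}ᶜ ∈ (𝒰 : Filter ℕ) :=
              Ultrafilter.mem_coe.mpr (Ultrafilter.compl_mem_iff_notMem.mpr hdS)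
            refine Filter.mem_of_superset hcm (fun n hn => ?_)
            simp only [mem_compl_iff, mem_setOf_eq] at hn ⊢
            exact iff_of_false hn hdS
        refine Filter.mem_of_superset hmem ?_
        intro n hn x hx
        rw [hFu n]
        refine hGeq (F n) S x (fun d hd => ?_)
        exact mem_iInter₂.mp hn d ⟨x, hd, hx⟩
      intro W hW
      filter_upwards [hEq] with n hn x hx
      rw [hn x hx]
      exact refl_mem_uniformity hW
    exact ⟨G S, htend.mapClusterPt.mono (Ultrafilter.of_le atTop)⟩
  -- Step B : closure A₀ is compact
  have stepB : IsCompact (closure A₀) := h.1 A₀ stepA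
  -- D is nonempty
  have hDne : Nonempty D := by
    rcases isEmpty_or_nonempty D with he | hne
    · exact absurd (countable_coe_iff.mp inferInstance) hDnc
    · exact hne
  -- Step C : G univ ∈ closure A₀
  have stepC : G univ ∈ closure A₀ := by
    have htend : Tendsto (fun F : Finset D => G (↑F : Set D)) atTop (𝓝 (G univ)) := by
      rw [ContinuousMap.tendsto_iff_forall_isCompact_tendstoUniformlyOn]
      intro K hK
      have hEq : ∀ᶠ F : Finset D in atTop, ∀ x ∈ K, G (↑F : Set D) x = G univ x := by
        filter_upwards [Filter.eventually_ge_atTop (hDKfin K hK).toFinset] with F hF x hx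
        refine hGeq (↑F) univ x (fun d hd => ?_)
        have : d ∈ (hDKfin K hK).toFinset := by
          rw [Set.Finite.mem_toFinset]; exact ⟨x, hd, hx⟩
        simp only [Finset.mem_coe, mem_univ, iff_true]
        exact hF this
      intro W hW
      filter_upwards [hEq] with F hF x hx
      rw [hF x hx]
      exact refl_mem_uniformity hW
    exact mem_closure_of_tendsto htend
      (Eventually.of_forall fun F => ⟨↑F, F.finite_toSet, rfl⟩)
  -- Step D : apply angelicity, get a sequence, and derive a contradiction
  obtain ⟨u, huA, hutend⟩ := h.2 A₀ stepB (G univ) stepC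
  choose F hFfin hFu using fun n => huA n
  -- pick d0 ∈ D outside all F n
  have hcnt : (⋃ n, F n).Countable := countable_iUnion (fun n => (hFfin n).countable)
  have hex4 : ∃ d0 : D, d0 ∉ ⋃ n, F n := by
    by_contra hall
    push_neg at hall
    have : (univ : Set D).Countable := hcnt.mono (fun d _ => hall d)
    have : Countable D := (Set.countable_univ_iff).mp this
    exact hDnc (countable_coe_iff.mp this)
  obtain ⟨d0, hd0⟩ := hex4
  -- evaluation at d0
  have heval : Tendsto (fun n => u n (d0 : X)) atTop (𝓝 (G univ (d0 : X))) :=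
    ((continuous_eval_const (d0 : X)).continuousAt.tendsto).comp hutend
  -- u n d0 = 0
  have hu0 : ∀ n, u n (d0 : X) = 0 := by
    intro n
    rw [hFu n, hGapp]
    refine finsum_mem_of_eqOn_zero (fun d hd => ?_)
    have hne : d ≠ d0 := fun hdd => hd0 (mem_iUnion.mpr ⟨n, hdd ▸ hd⟩)
    refine hf0 d (d0 : X) (Or.inr ⟨d0.2, ?_⟩)
    simp only [mem_singleton_iff]
    exact fun hh => hne (Subtype.ext hh.symm ▸ rfl)
  -- G univ d0 = 1
  have hu1 : G univ (d0 : X) = 1 := by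
    rw [hGapp, finsum_mem_univ]
    rw [finsum_eq_single (fun d : D => f d (d0 : X)) d0 ?_]
    · exact hfd d0
    · intro d hd
      refine hf0 d (d0 : X) (Or.inr ⟨d0.2, ?_⟩)
      simp only [mem_singleton_iff]
      intro hh
      exact hd (Subtype.ext hh.symm ▸ rfl)
  rw [hu1] at heval
  simp only [hu0] at heval
  exact zero_ne_one (tendsto_nhds_unique tendsto_const_nhds heval)

/-- A paracompact first-countable Tychonoff space `X` such that
`C_k(X)` is angelic is Lindelöf. -/
theorem statement0 (X : Type*) [TopologicalSpace X] [T35Space X]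
    [ParacompactSpace X] [FirstCountableTopology X]
    (h : Angelic C(X, ℝ)) : LindelofSpace X :=
  statement0' X h
end

section
/- Let X be a paracompact Čech-complete space. Then C_k(X) is an angelic space if and only if X is Lindelöf. -/
open Set Filter Topology Uniformity

set_option maxHeartbeats 1000000
set_option synthInstance.maxHeartbeats 200000

section StatementTwoAux
open Function
universe u
variable {X : Type u} [TopologicalSpace X]

lemma my_isEmbedding_stoneCechUnit [T35Space X] :
    Topology.IsEmbedding (stoneCechUnit : X → StoneCech X) := by
  refine ⟨Topology.isInducing_iff_nhds.2 fun x => le_antisymm ?_ ?_, injective_stoneCechUnit_of_t35Space⟩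
  · exact (continuous_stoneCechUnit.tendsto x).le_comap
  · intro U hU
    rcases mem_nhds_iff.1 hU with ⟨V, hVU, hVo, hxV⟩
    obtain ⟨f, hfc, hfx, hf1⟩ :=
      CompletelyRegularSpace.completely_regular x Vᶜ hVo.isClosed_compl (by simp [hxV])
    set g := stoneCechExtend hfc with hg
    have hge : g ∘ stoneCechUnit = f := stoneCechExtend_extends hfc
    refine mem_comap.2 ⟨g ⁻¹' {y : unitInterval | (y : ℝ) < 1}, ?_, ?_⟩
    · refine IsOpen.mem_nhds ?_ ?_
      · exact (isOpen_Iio.preimage continuous_subtype_val).preimage (continuous_stoneCechExtend hfc)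
      · have : g (stoneCechUnit x) = f x := congrFun hge x
        simp only [mem_preimage, this, hfx, mem_setOf_eq, Icc.coe_zero]
        norm_num
    · intro z hz
      simp only [mem_preimage, mem_setOf_eq] at hz
      rw [show g (stoneCechUnit z) = f z from congrFun hge z] at hz
      by_contra hzU
      have hzV : z ∈ Vᶜ := fun hzV => hzU (hVU hzV)
      rw [hf1 hzV] at hz
      simp at hz


lemma my_govaerts_equicontinuous [T35Space X]
    (hX : IsGδ (Set.range (stoneCechUnit : X → StoneCech X)))
    {A : Set C(X, ℝ)}
    (hA : ∀ u : ℕ → C(X, ℝ), (∀ n, u n ∈ A) → ∃ f : C(X, ℝ), MapClusterPt f atTop u) :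
    Equicontinuous (fun f : A => ((f : C(X, ℝ)) : X → ℝ)) := by
  classical
  set β : X → StoneCech X := stoneCechUnit with hβ
  have hemb : Topology.IsEmbedding β := my_isEmbedding_stoneCechUnit
  obtain ⟨G, hGopen, hGeq⟩ := isGδ_iff_eq_iInter_nat.1 hX
  intro x₀
  rw [Metric.equicontinuousAt_iff_right]
  by_contra hne
  push_neg at hne
  obtain ⟨ε, hε, hne⟩ := hne
  have hfreq : ∀ U ∈ 𝓝 x₀, ∃ y ∈ U, ∃ f ∈ A, ε ≤ dist ((f : C(X, ℝ)) y) (f x₀) := by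
    intro U hU
    obtain ⟨y, hyU, hy⟩ := Filter.frequently_iff.1 hne hU
    obtain ⟨⟨f, hf⟩, hd⟩ := hy
    exact ⟨y, hyU, f, hf, by rw [dist_comm]; exact hd⟩
  have hε8 : (0:ℝ) < ε / 8 := by linarith
  have hsel : ∀ U : Set X, ∃ p : C(X, ℝ) × X,
      U ∈ 𝓝 x₀ → p.1 ∈ A ∧ p.2 ∈ U ∧ ε ≤ dist (p.1 p.2) (p.1 x₀) := by
    intro U
    by_cases hU : U ∈ 𝓝 x₀
    · obtain ⟨y, hyU, f, hfA, hd⟩ := hfreq U hU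
      exact ⟨(f, y), fun _ => ⟨hfA, hyU, hd⟩⟩
    · exact ⟨(0, x₀), fun h => absurd h hU⟩
  choose P hP using hsel
  set F : Set X → C(X, ℝ) := fun U => (P U).1 with hF
  set Y : Set X → X := fun U => (P U).2 with hY
  have hx₀G : ∀ n, β x₀ ∈ G n := by
    intro n
    have h0 : β x₀ ∈ Set.range β := ⟨x₀, rfl⟩
    rw [hGeq] at h0
    exact mem_iInter.1 h0 n
  have hbase : ∀ (W : Set (StoneCech X)), IsOpen W → β x₀ ∈ W →
      ∃ V : Set X, IsOpen V ∧ x₀ ∈ V ∧ closure (β '' V) ⊆ W := by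
    intro W hWo hWx
    obtain ⟨t, htn, htc, htW⟩ := exists_mem_nhds_isClosed_subset (hWo.mem_nhds hWx)
    refine ⟨β ⁻¹' interior t, isOpen_interior.preimage continuous_stoneCechUnit,
      mem_preimage.2 (mem_interior_iff_mem_nhds.2 htn), ?_⟩
    have h1 : β '' (β ⁻¹' interior t) ⊆ t :=
      (image_preimage_subset _ _).trans interior_subset
    exact (closure_minimal h1 htc).trans htW
  set Good : ℕ → Set X → Prop := fun n V => IsOpen V ∧ x₀ ∈ V ∧ closure (β '' V) ⊆ G n
    with hGood
  have hstep : ∀ (n : ℕ) (V : Set X), ∃ V' : Set X,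
      Good n V → Good (n+1) V' ∧ V' ⊆ V ∧ ∀ z ∈ V', dist (F V z) (F V x₀) < ε / 8 := by
    intro n V
    by_cases hV : Good n V
    · obtain ⟨V₁, h1o, h1m, h1s⟩ := hbase (G (n+1)) (hGopen _) (hx₀G _)
      refine ⟨V ∩ V₁ ∩ {z | dist (F V z) (F V x₀) < ε / 8}, fun _ => ⟨⟨?_, ?_, ?_⟩, ?_, ?_⟩⟩
      · exact ((hV.1.inter h1o).inter (isOpen_lt ((F V).continuous.dist continuous_const)
          continuous_const))
      · exact ⟨⟨hV.2.1, h1m⟩, by simp [hε8]⟩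
      · refine (closure_mono (image_mono ?_)).trans h1s
        exact fun z hz => hz.1.2
      · exact fun z hz => hz.1.1
      · exact fun z hz => hz.2
    · exact ⟨∅, fun h => absurd h hV⟩
  choose stepf hstepf using hstep
  obtain ⟨V₀, hV₀o, hV₀m, hV₀s⟩ := hbase (G 0) (hGopen 0) (hx₀G 0)
  set U : ℕ → Set X := fun n => Nat.rec V₀ (fun n Un => stepf n Un) n with hU
  have hUsucc : ∀ n, U (n+1) = stepf n (U n) := fun n => rfl
  have hUgood : ∀ n, Good n (U n) := by
    intro n
    induction n with
    | zero => exact ⟨hV₀o, hV₀m, hV₀s⟩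
    | succ n ih => rw [hUsucc]; exact (hstepf n (U n) ih).1
  have hUsub : ∀ n, U (n+1) ⊆ U n := fun n => by
    rw [hUsucc]; exact (hstepf n (U n) (hUgood n)).2.1
  have hUdist : ∀ n, ∀ z ∈ U (n+1), dist (F (U n) z) (F (U n) x₀) < ε / 8 := fun n => by
    rw [hUsucc]; exact (hstepf n (U n) (hUgood n)).2.2
  have hUanti : Antitone U := antitone_nat_of_succ_le hUsub
  have hUnhds : ∀ n, U n ∈ 𝓝 x₀ := fun n => (hUgood n).1.mem_nhds (hUgood n).2.1
  set f : ℕ → C(X, ℝ) := fun n => F (U n) with hf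
  set y : ℕ → X := fun n => Y (U n) with hy
  have hfa : ∀ n, f n ∈ A ∧ y n ∈ U n ∧ ε ≤ dist (f n (y n)) (f n x₀) :=
    fun n => hP (U n) (hUnhds n)
  obtain ⟨g, hg⟩ := hA f fun n => (hfa n).1
  set Z' : Set (StoneCech X) := closure (Set.range fun n => β (y n)) with hZ'
  have hZ'r : Z' ⊆ Set.range β := by
    intro z hz
    by_contra hzr
    have hall : ∀ n, z ∈ G n := by
      intro n
      have hsplit : (Set.range fun k => β (y k)) ⊆
          ((fun k => β (y k)) '' (Iio n)) ∪ (β '' U n) := by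
        rintro _ ⟨k, rfl⟩
        rcases lt_or_ge k n with h | h
        · exact Or.inl (mem_image_of_mem _ h)
        · exact Or.inr ⟨y k, hUanti h (hfa k).2.1, rfl⟩
      have hz2 := closure_mono hsplit hz
      rw [closure_union] at hz2
      rcases hz2 with h | h
      · have hfin : ((fun k => β (y k)) '' (Iio n)).Finite := (Set.finite_Iio n).image _
        rw [hfin.isClosed.closure_eq] at h
        obtain ⟨k, _, hk⟩ := h
        exact absurd ⟨y k, hk⟩ hzr
      · exact (hUgood n).2.2 h
    exact hzr (hGeq ▸ mem_iInter.2 hall)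
  set C : Set X := insert x₀ (β ⁻¹' Z') with hC
  have hCcomp : IsCompact C := by
    have h1 : IsCompact (β ⁻¹' Z') := by
      rw [hemb.isCompact_iff, Set.image_preimage_eq_of_subset hZ'r]
      exact isClosed_closure.isCompact
    exact h1.insert x₀
  have hyC : ∀ n, y n ∈ C := fun n => Or.inr (subset_closure ⟨n, rfl⟩)
  have hx₀C : x₀ ∈ C := mem_insert _ _
  have hNg : {h : C(X, ℝ) | ∀ z ∈ C, dist (h z) (g z) < ε / 8} ∈ 𝓝 g := by
    have hV : {p : ℝ × ℝ | dist p.1 p.2 < ε / 8} ∈ 𝓤 ℝ := Metric.dist_mem_uniformity hε8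
    have hVC : {fg : C(X, ℝ) × C(X, ℝ) |
        ∀ x ∈ C, (fg.1 x, fg.2 x) ∈ {p : ℝ × ℝ | dist p.1 p.2 < ε / 8}} ∈ 𝓤 C(X, ℝ) :=
      ContinuousMap.hasBasis_compactConvergenceUniformity.mem_of_mem
        (i := (C, {p : ℝ × ℝ | dist p.1 p.2 < ε / 8})) ⟨hCcomp, hV⟩
    refine mem_of_superset (UniformSpace.ball_mem_nhds g hVC) ?_
    intro h hh z hz
    have := hh z hz
    rw [dist_comm]
    exact this
  have hMfreq : ∃ᶠ n in atTop, ∀ z ∈ C, dist (f n z) (g z) < ε / 8 :=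
    mapClusterPt_iff_frequently.1 hg _ hNg
  set Mset : Set ℕ := {n | ∀ z ∈ C, dist (f n z) (g z) < ε / 8} with hMsetdef
  set l₀ : Filter ℕ := atTop ⊓ 𝓟 Mset with hl₀
  haveI hl₀ne : l₀.NeBot := frequently_iff_neBot.1 hMfreq
  have hMem : Mset ∈ l₀ := mem_inf_of_right (mem_principal_self _)
  have hle : map (fun n => β (y n)) l₀ ≤ 𝓟 Z' :=
    le_principal_iff.2 (mem_map.2 (Eventually.of_forall fun n => subset_closure ⟨n, rfl⟩))
  obtain ⟨zz, hzzZ, hzzcl⟩ := (isClosed_closure.isCompact).exists_clusterPt hle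
  obtain ⟨y', hy'⟩ := hZ'r hzzZ
  have hkey : ∀ V ∈ 𝓝 y', ∀ s ∈ l₀, ∃ n ∈ s, y n ∈ V := by
    intro V hV s hs
    have hVc : V ∈ comap β (𝓝 (β y')) := by
      rw [← hemb.toIsInducing.nhds_eq_comap]; exact hV
    obtain ⟨W, hW, hWV⟩ := mem_comap.1 hVc
    rw [hy'] at hW
    have hmem : (fun n => β (y n)) '' s ∈ map (fun n => β (y n)) l₀ := image_mem_map hs
    obtain ⟨w, hwW, hwim⟩ := clusterPt_iff_nonempty.1 hzzcl hW hmem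
    obtain ⟨n, hns, rfl⟩ := hwim
    exact ⟨n, hns, hWV hwW⟩
  have hy'cl : ∀ i : ℕ, y' ∈ closure (U (i+1)) := by
    intro i
    by_contra hcl
    have hVn : (closure (U (i+1)))ᶜ ∈ 𝓝 y' :=
      (isClosed_closure.isOpen_compl).mem_nhds hcl
    have hs : {n | i + 1 ≤ n} ∈ l₀ := mem_inf_of_left (mem_atTop _)
    obtain ⟨n, hn, hyn⟩ := hkey _ hVn _ hs
    exact hyn (subset_closure (hUanti hn (hfa n).2.1))
  have hfy' : ∀ i, dist (f i y') (f i x₀) ≤ ε / 8 := by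
    intro i
    have hsub : closure (U (i+1)) ⊆ {z | dist (f i z) (f i x₀) ≤ ε / 8} :=
      closure_minimal (fun z hz => le_of_lt (hUdist i z hz))
        (isClosed_le ((f i).continuous.dist continuous_const) continuous_const)
    exact hsub (hy'cl i)
  have hy'C : y' ∈ C := Or.inr (by rw [mem_preimage, hy']; exact hzzZ)
  obtain ⟨n₀, hn₀⟩ := hMfreq.exists
  have hgd : dist (g y') (g x₀) ≤ 3 * (ε / 8) := by
    have h1 : dist (g y') (f n₀ y') < ε / 8 := by rw [dist_comm]; exact hn₀ y' hy'C
    have h2 : dist (f n₀ y') (f n₀ x₀) ≤ ε / 8 := hfy' n₀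
    have h3 : dist (f n₀ x₀) (g x₀) < ε / 8 := hn₀ x₀ hx₀C
    calc dist (g y') (g x₀) ≤
        dist (g y') (f n₀ y') + dist (f n₀ y') (f n₀ x₀) + dist (f n₀ x₀) (g x₀) :=
          dist_triangle4 _ _ _ _
      _ ≤ 3 * (ε / 8) := by linarith
  have hVg : {z | dist (g z) (g y') < ε / 8} ∈ 𝓝 y' :=
    g.continuous.continuousAt (Metric.ball_mem_nhds _ hε8)
  obtain ⟨n, hnM, hynV⟩ := hkey _ hVg _ hMem
  have hb1 : dist (f n (y n)) (g (y n)) < ε / 8 := hnM (y n) (hyC n)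
  have hb2 : dist (g (y n)) (g y') < ε / 8 := hynV
  have hb3 : dist (g x₀) (f n x₀) < ε / 8 := by rw [dist_comm]; exact hnM x₀ hx₀C
  have hb := (hfa n).2.2
  have hchain : dist (f n (y n)) (f n x₀) ≤
      dist (f n (y n)) (g (y n)) + dist (g (y n)) (g x₀) + dist (g x₀) (f n x₀) :=
    dist_triangle4 _ _ _ _
  have hchain2 : dist (g (y n)) (g x₀) ≤ dist (g (y n)) (g y') + dist (g y') (g x₀) :=
    dist_triangle _ _ _
  linarith


lemma my_isCompact_closure_of_equicont {A : Set C(X, ℝ)}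
    (heq : Equicontinuous (fun f : A => ((f : C(X, ℝ)) : X → ℝ)))
    (hbd : ∀ x : X, ∃ M : ℝ, ∀ f ∈ A, |(f : C(X, ℝ)) x| ≤ M) :
    IsCompact (closure A) := by
  classical
  choose M hM using hbd
  set Φ : C(X, ℝ) → (X → ℝ) := fun f => ⇑f with hΦ
  have himg : (Φ '' A).Equicontinuous := by
    intro x U hU
    filter_upwards [heq x U hU] with y hy
    rintro ⟨g, ⟨f, hf, rfl⟩⟩
    exact hy ⟨f, hf⟩
  set T := closure (Φ '' A) with hT
  have hTeq : T.Equicontinuous := himg.closure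
  have hTcont : ∀ g ∈ T, Continuous g := fun g hg => hTeq.continuous ⟨g, hg⟩
  have hTP : T ⊆ Set.pi univ (fun x => Icc (-M x) (M x)) := by
    refine closure_minimal ?_ (isClosed_set_pi fun x _ => isClosed_Icc)
    rintro g ⟨f, hf, rfl⟩ x _
    exact abs_le.1 (hM x f hf)
  have hTcomp : IsCompact T :=
    (isCompact_univ_pi fun x => isCompact_Icc).of_isClosed_subset isClosed_closure hTP
  set S : Set C(X, ℝ) := Φ ⁻¹' T with hS
  have hST : Φ '' S = T := by
    apply Set.image_preimage_eq_of_subset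
    intro g hg
    exact ⟨⟨g, hTcont g hg⟩, rfl⟩
  have hScomp : IsCompact S := by
    refine ArzelaAscoli.isCompact_of_equicontinuous S ?_ ?_
    · show IsCompact (ContinuousMap.toFun '' S)
      have h2 : ContinuousMap.toFun '' S = Φ '' S := rfl
      rw [h2, hST]; exact hTcomp
    · intro x U hU
      filter_upwards [hTeq x U hU] with y hy
      rintro ⟨f, hf⟩
      exact hy ⟨Φ f, hf⟩
  have hAS : A ⊆ S := fun f hf => subset_closure ⟨f, hf, rfl⟩
  exact hScomp.of_isClosed_subset isClosed_closure (closure_minimal hAS hScomp.isClosed)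


lemma my_pointwise_bounded {A : Set C(X, ℝ)}
    (hA : ∀ u : ℕ → C(X, ℝ), (∀ n, u n ∈ A) → ∃ f : C(X, ℝ), MapClusterPt f atTop u)
    (x : X) : ∃ M : ℝ, ∀ f ∈ A, |(f : C(X, ℝ)) x| ≤ M := by
  by_contra h
  push_neg at h
  choose u huA hub using fun n : ℕ => h n
  obtain ⟨f, hfc⟩ := hA u huA
  have heval : MapClusterPt (f x) atTop fun n => u n x := by
    have hcont : Continuous fun g : C(X, ℝ) => g x := continuous_eval_const x
    exact hfc.continuousAt_comp hcont.continuousAt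
  have hfreq : ∃ᶠ n in atTop, dist (u n x) (f x) < 1 :=
    mapClusterPt_iff_frequently.1 heval _ (Metric.ball_mem_nhds _ one_pos)
  obtain ⟨n, hn, hdn⟩ := (hfreq.and_eventually (eventually_ge_atTop (⌈|f x| + 1⌉₊))).exists
  have h1 : (n : ℝ) < |u n x| := hub n
  have h2 : |u n x| ≤ |f x| + 1 := by
    have := abs_sub_abs_le_abs_sub (u n x) (f x)
    rw [Real.dist_eq] at hn
    linarith
  have h3 : |f x| + 1 ≤ (n : ℝ) := by
    have := Nat.ceil_le.1 (le_refl ⌈|f x| + 1⌉₊)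
    calc |f x| + 1 ≤ (⌈|f x| + 1⌉₊ : ℝ) := Nat.le_ceil _
      _ ≤ (n : ℝ) := by exact_mod_cast hdn
  linarith


lemma my_exists_min_subcover {ι : Type*} {V : ι → Set X}
    (hpf : ∀ x : X, {i | x ∈ V i}.Finite) (hcov : ⋃ i, V i = univ) :
    ∃ J : Set ι, (⋃ i ∈ J, V i) = univ ∧
      ∀ i ∈ J, ∃ x ∈ V i, ∀ j ∈ J, j ≠ i → x ∉ V j := by
  classical
  set S : Set (Set ι) := {J | ⋃ i ∈ J, V i = univ} with hSdef
  have hchain : ∀ c ⊆ S, IsChain (· ⊆ ·) c → c.Nonempty → ∃ lb ∈ S, ∀ s ∈ c, lb ⊆ s := by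
    intro c hcS hchain hcne
    refine ⟨⋂₀ c, ?_, fun s hs => sInter_subset_of_mem hs⟩
    rw [hSdef, mem_setOf_eq, eq_univ_iff_forall]
    intro x
    set T : Set ι := {i | x ∈ V i} with hT
    have hTfin : T.Finite := hpf x
    set c' : Set (Set ι) := (fun J => J ∩ T) '' c with hc'
    have hc'fin : c'.Finite := by
      refine Finite.subset hTfin.finite_subsets ?_
      rintro _ ⟨J, _, rfl⟩
      exact inter_subset_right
    have hc'ne : c'.Nonempty := hcne.image _
    have hc'chain : IsChain (· ⊆ ·) c' := by
      rintro _ ⟨J1, hJ1, rfl⟩ _ ⟨J2, hJ2, rfl⟩ hne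
      rcases eq_or_ne J1 J2 with rfl | hJ
      · exact absurd rfl hne
      · rcases hchain hJ1 hJ2 hJ with h | h
        · exact Or.inl (inter_subset_inter_left _ h)
        · exact Or.inr (inter_subset_inter_left _ h)
    obtain ⟨m, hmc', hmin⟩ := Set.Finite.exists_minimalFor id c' hc'fin hc'ne
    obtain ⟨J₀, hJ₀c, hmJ⟩ := id hmc'
    have hleast : ∀ a ∈ c', m ⊆ a := by
      intro a hac'
      rcases eq_or_ne a m with rfl | hne
      · exact subset_rfl
      · rcases hc'chain hac' hmc' hne with h | h
        · exact hmin hac' h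
        · exact h
    -- J₀ covers x
    have hJ₀S : J₀ ∈ S := hcS hJ₀c
    have : x ∈ ⋃ i ∈ J₀, V i := by rw [hJ₀S]; exact mem_univ x
    obtain ⟨i, hiJ₀, hiV⟩ := mem_iUnion₂.1 this
    have him : i ∈ m := by rw [← hmJ]; exact ⟨hiJ₀, hiV⟩
    refine mem_iUnion₂.2 ⟨i, ?_, hiV⟩
    refine mem_sInter.2 fun J hJ => ?_
    exact (hleast (J ∩ T) ⟨J, hJ, rfl⟩ him).1
  have huniv : (univ : Set ι) ∈ S := by
    rw [hSdef, mem_setOf_eq]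
    simpa using hcov
  obtain ⟨J, _, hJS, hJmin⟩ := zorn_superset_nonempty S hchain univ huniv
  refine ⟨J, hJS, ?_⟩
  intro i hiJ
  have hnc : J \ {i} ∉ S := by
    intro hmem
    have h1 : J \ {i} ⊆ J := diff_subset
    have h2 : J ⊆ J \ {i} := hJmin hmem h1
    exact (h2 hiJ).2 rfl
  have : ∃ x, x ∉ ⋃ j ∈ J \ {i}, V j := by
    by_contra h
    push_neg at h
    exact hnc (eq_univ_iff_forall.2 h)
  obtain ⟨x, hx⟩ := this
  have hxJ : x ∈ ⋃ j ∈ J, V j := by rw [hJS]; exact mem_univ x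
  obtain ⟨j, hjJ, hjV⟩ := mem_iUnion₂.1 hxJ
  rcases eq_or_ne j i with rfl | hne
  · exact ⟨x, hjV, fun k hkJ hki hxk => hx (mem_iUnion₂.2 ⟨k, ⟨hkJ, hki⟩, hxk⟩)⟩
  · exact absurd (mem_iUnion₂.2 ⟨j, ⟨hjJ, hne⟩, hjV⟩) hx



lemma my_angelic_of_lindelof [T35Space X]
    (hX : IsGδ (Set.range (stoneCechUnit : X → StoneCech X)))
    (hL : LindelofSpace X) : Angelic C(X, ℝ) := by
  classical
  constructor
  · intro A hA
    exact my_isCompact_closure_of_equicont (my_govaerts_equicontinuous hX hA)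
      (fun x => my_pointwise_bounded hA x)
  · intro A hAcl z hz
    set H := closure A with hH
    have hHrcc : ∀ u : ℕ → C(X, ℝ), (∀ n, u n ∈ H) → ∃ f : C(X, ℝ), MapClusterPt f atTop u := by
      intro u hu
      have hle : map u atTop ≤ 𝓟 H := le_principal_iff.2 (mem_map.2 (Eventually.of_forall hu))
      obtain ⟨f, _, hf⟩ := hAcl.exists_clusterPt hle
      exact ⟨f, hf⟩
    have heq := my_govaerts_equicontinuous hX hHrcc
    -- countable separating set
    have hcov : ∀ m : ℕ, ∀ x : X, ∃ O : Set X, O ∈ 𝓝 x ∧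
        ∀ f ∈ H, ∀ w ∈ O, dist ((f : C(X,ℝ)) w) (f x) < 1 / (m + 1) := by
      intro m x
      have h1 := heq x
      rw [Metric.equicontinuousAt_iff_right] at h1
      have h2 := h1 (1 / (m + 1)) (by positivity)
      refine ⟨{w | ∀ f : H, dist ((f : C(X,ℝ)) x) ((f : C(X,ℝ)) w) < 1 / (m+1)}, h2, ?_⟩
      intro f hf w hw
      have := hw ⟨f, hf⟩
      rwa [dist_comm]
    choose O hOnhds hOsep using hcov
    have hDm : ∀ m : ℕ, ∃ t : Set X, t.Countable ∧ univ ⊆ ⋃ x ∈ t, interior (O m x) := by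
      intro m
      refine isLindelof_iff_countable_subcover.1 isLindelof_univ
        (fun x => interior (O m x)) (fun _ => isOpen_interior) ?_
      intro w _
      exact mem_iUnion.2 ⟨w, mem_interior_iff_mem_nhds.2 (hOnhds m w)⟩
    choose D hDc hDcov using hDm
    set D0 : Set X := ⋃ m, D m with hD0
    have hD0c : D0.Countable := countable_iUnion hDc
    have hsep : ∀ f g : C(X, ℝ), f ∈ H → g ∈ H → (∀ d ∈ D0, f d = g d) → f = g := by
      intro f g hf hg hfg
      ext w
      have hdist : ∀ m : ℕ, dist (f w) (g w) ≤ 2 / (m + 1) := by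
        intro m
        obtain ⟨d, hd, hwd⟩ : ∃ d ∈ D m, w ∈ interior (O m d) := by
          have := hDcov m (mem_univ w)
          simpa using this
        have h1 := hOsep m d f hf w (interior_subset hwd)
        have h2 := hOsep m d g hg w (interior_subset hwd)
        have h3 : f d = g d := hfg d (mem_iUnion.2 ⟨m, hd⟩)
        have h4 : dist (f w) (g w) ≤ dist (f w) (f d) + dist (f d) (g w) := dist_triangle _ _ _
        have h5 : dist (f d) (g w) = dist (g w) (g d) := by rw [h3, dist_comm]
        have h6 : 2 / ((m : ℝ) + 1) = 1 / ((m : ℝ) + 1) + 1 / ((m : ℝ) + 1) := by ring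
        linarith
      have hdle : dist (f w) (g w) ≤ 0 := by
        have htend : Tendsto (fun m : ℕ => 2 / ((m : ℝ) + 1)) atTop (𝓝 0) := by
          have h0 := tendsto_const_div_atTop_nhds_zero_nat (2:ℝ)
          have h1 : Tendsto (fun m : ℕ => m + 1) atTop atTop := tendsto_add_atTop_nat 1
          have h2 := h0.comp h1
          refine h2.congr fun m => ?_
          simp only [Function.comp_apply]
          push_cast
          ring
        exact ge_of_tendsto htend (Eventually.of_forall hdist)
      exact dist_le_zero.1 hdle
    haveI hD0ct : Countable ↥D0 := hD0c.to_subtype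
    set ρ : C(X, ℝ) → (↥D0 → ℝ) := fun f d => f d with hρ
    have hρc : Continuous ρ := continuous_pi fun d => continuous_eval_const (d : X)
    haveI hHcs : CompactSpace ↥H := isCompact_iff_compactSpace.1 hAcl
    have hinj : Function.Injective fun f : ↥H => ρ (f : C(X, ℝ)) := by
      intro f g hfg
      apply Subtype.ext
      exact hsep _ _ f.2 g.2 fun d hd => congrFun hfg ⟨d, hd⟩
    have hembH : Topology.IsClosedEmbedding fun f : ↥H => ρ (f : C(X, ℝ)) :=
      (hρc.comp continuous_subtype_val).isClosedEmbedding hinj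
    haveI : TopologicalSpace.MetrizableSpace ↥H := hembH.toIsEmbedding.metrizableSpace
    haveI : FirstCountableTopology ↥H :=
      TopologicalSpace.PseudoMetrizableSpace.firstCountableTopology
    haveI : FrechetUrysohnSpace ↥H := FirstCountableTopology.frechetUrysohnSpace
    set z' : ↥H := ⟨z, hz⟩ with hz'def
    have hz'cl : z' ∈ closure {h : ↥H | (h : C(X, ℝ)) ∈ A} := by
      have him : Subtype.val '' {h : ↥H | (h : C(X, ℝ)) ∈ A} = A := by
        ext f
        constructor
        · rintro ⟨⟨f, hfH⟩, hfA, rfl⟩; exact hfA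
        · intro hfA; exact ⟨⟨f, subset_closure hfA⟩, hfA, rfl⟩
      rw [Topology.IsInducing.subtypeVal.closure_eq_preimage_closure_image, him]
      exact hz
    obtain ⟨u, huA, hu⟩ := mem_closure_iff_seq_limit.1 hz'cl
    exact ⟨fun n => ((u n : ↥H) : C(X, ℝ)), huA, (continuous_subtype_val.tendsto z').comp hu⟩

lemma my_not_angelic_of_not_lindelof [T35Space X] [ParacompactSpace X]
    (hnl : ¬ LindelofSpace X) : ¬ Angelic C(X, ℝ) := by
  classical
  intro hAng
  have hnL : ¬ IsLindelof (univ : Set X) := fun h => hnl ⟨h⟩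
  have hbad : ∃ (ιW : Type u) (W : ιW → Set X), (∀ i, IsOpen (W i)) ∧ (univ ⊆ ⋃ i, W i) ∧
      ∀ t : Set ιW, t.Countable → ¬ (univ ⊆ ⋃ i ∈ t, W i) := by
    by_contra h
    push_neg at h
    exact hnL (isLindelof_of_countable_subcover fun {ι} U hU hcov => h ι U hU hcov)
  obtain ⟨ιW, W, hWopen, hWcov, hWbad⟩ := hbad
  obtain ⟨V, hVopen, hVcov, hVlf, hVref⟩ :=
    precise_refinement W hWopen (univ_subset_iff.1 hWcov)
  obtain ⟨J, hJcov, hJwit⟩ :=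
    my_exists_min_subcover (V := V) (fun x => hVlf.point_finite x) hVcov
  have hJunc : ¬ J.Countable := by
    intro hc
    refine hWbad J hc ?_
    intro z _
    have hz : z ∈ ⋃ i ∈ J, V i := hJcov ▸ mem_univ z
    obtain ⟨i, hiJ, hiV⟩ := mem_iUnion₂.1 hz
    exact mem_iUnion₂.2 ⟨i, hiJ, hVref i hiV⟩
  choose xw hxwV hxwsep using hJwit
  haveI hne : Nonempty ↥J := by
    rcases eq_empty_or_nonempty J with rfl | h
    · exact absurd countable_empty hJunc
    · exact h.to_subtype
  have hκunc : ¬ Countable ↥J := fun h => hJunc (countable_coe_iff.1 h)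
  set x : ↥J → X := fun i => xw i i.2 with hxdef
  have hxV : ∀ i : ↥J, x i ∈ V (i : ιW) := fun i => hxwV (i : ιW) i.2
  have hxsep : ∀ i j : ↥J, j ≠ i → x i ∉ V (j : ιW) := fun i j hne' =>
    hxwsep (i : ιW) i.2 (j : ιW) j.2 fun h => hne' (Subtype.ext h)
  have hbump : ∀ i : ↥J, ∃ φ : C(X, ℝ), φ (x i) = 1 ∧ (∀ z, z ∉ V (i : ιW) → φ z = 0) ∧
      ∀ z, 0 ≤ φ z ∧ φ z ≤ 1 := by
    intro i
    obtain ⟨f, hfc, hfx, hf1⟩ := CompletelyRegularSpace.completely_regular (x i) (V (i : ιW))ᶜ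
      (hVopen (i : ιW)).isClosed_compl (by simp [hxV i])
    refine ⟨⟨fun z => 1 - (f z : ℝ),
      continuous_const.sub (continuous_subtype_val.comp hfc)⟩, ?_, ?_, ?_⟩
    · simp [hfx]
    · intro z hz
      have : f z = 1 := hf1 hz
      simp [this]
    · intro z
      have h1 := (f z).2.1
      have h2 := (f z).2.2
      constructor <;> simp <;> linarith
  choose φ hφx hφ0 hφb using hbump
  have hφsupp : ∀ i : ↥J, support (fun z => φ i z) ⊆ V (i : ιW) := by
    intro i z hz
    by_contra hzV
    exact hz (hφ0 i z hzV)
  have hVlfκ : LocallyFinite fun i : ↥J => V (i : ιW) :=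
    hVlf.comp_injective Subtype.coe_injective
  have hlfsupp : LocallyFinite fun i : ↥J => support fun z => φ i z := hVlfκ.subset hφsupp
  have hgc : Continuous fun z => ∑ᶠ i : ↥J, φ i z :=
    continuous_finsum (fun i => (φ i).continuous) hlfsupp
  set g : C(X, ℝ) := ⟨fun z => ∑ᶠ i, φ i z, hgc⟩ with hgdef
  set fF : Finset ↥J → C(X, ℝ) := fun F => ∑ i ∈ F, φ i with hfFdef
  have hfFapp : ∀ (F : Finset ↥J) (z : X), fF F z = ∑ i ∈ F, φ i z := by
    intro F z
    simp [hfFdef]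
  set A : Set C(X, ℝ) := Set.range fF with hAdef
  have hlocal : ∀ z : X, ∃ N ∈ 𝓝 z, ∃ S : Finset ↥J,
      ∀ (F : Finset ↥J) (w : X), w ∈ N → fF F w = fF (F ∩ S) w := by
    intro z
    obtain ⟨N, hN, hSfin⟩ := hVlfκ z
    refine ⟨N, hN, hSfin.toFinset, ?_⟩
    intro F w hw
    rw [hfFapp, hfFapp]
    refine (Finset.sum_subset Finset.inter_subset_left ?_).symm
    intro i hiF hiS
    apply hφ0
    intro hwV
    exact hiS (Finset.mem_inter.2 ⟨hiF, hSfin.mem_toFinset.2 ⟨w, hwV, hw⟩⟩)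
  have heqA : Equicontinuous fun f : A => ((f : C(X, ℝ)) : X → ℝ) := by
    intro z
    rw [Metric.equicontinuousAt_iff_right]
    intro ε hε
    obtain ⟨N, hN, S, hNS⟩ := hlocal z
    have hz' : z ∈ N := mem_of_mem_nhds hN
    have hone : ∀ T : Finset ↥J, ∀ᶠ w in 𝓝 z, dist (fF T w) (fF T z) < ε := fun T =>
      Metric.tendsto_nhds.1 ((fF T).continuous.tendsto z) ε hε
    have hev : ∀ᶠ w in 𝓝 z, ∀ T ∈ (↑S.powerset : Set (Finset ↥J)),
        dist (fF T w) (fF T z) < ε :=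
      (eventually_all_finite (S.powerset).finite_toSet).2 fun T _ => hone T
    filter_upwards [hev, hN] with w hw1 hw2
    rintro ⟨f, F, rfl⟩
    have e1 : fF F w = fF (F ∩ S) w := hNS F w hw2
    have e2 : fF F z = fF (F ∩ S) z := hNS F z hz'
    show dist (fF F z) (fF F w) < ε
    rw [e1, e2, dist_comm]
    exact hw1 (F ∩ S) (by simp [Finset.mem_powerset, Finset.inter_subset_right])
  have hbdA : ∀ z : X, ∃ M : ℝ, ∀ f ∈ A, |(f : C(X, ℝ)) z| ≤ M := by
    intro z
    obtain ⟨N, hN, S, hNS⟩ := hlocal z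
    have hz' : z ∈ N := mem_of_mem_nhds hN
    refine ⟨(S.card : ℝ), ?_⟩
    rintro f ⟨F, rfl⟩
    rw [hNS F z hz', hfFapp]
    have h0 : (0:ℝ) ≤ ∑ i ∈ F ∩ S, φ i z := Finset.sum_nonneg fun i _ => (hφb i z).1
    rw [abs_of_nonneg h0]
    calc ∑ i ∈ F ∩ S, φ i z ≤ ∑ i ∈ F ∩ S, 1 := Finset.sum_le_sum fun i _ => (hφb i z).2
      _ = ((F ∩ S).card : ℝ) := by simp
      _ ≤ (S.card : ℝ) := by exact_mod_cast Finset.card_le_card Finset.inter_subset_right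
  have hclA : IsCompact (closure A) := my_isCompact_closure_of_equicont heqA hbdA
  have hgx : ∀ i : ↥J, g (x i) = 1 := by
    intro i
    have h1 : ∀ j : ↥J, j ≠ i → φ j (x i) = 0 := fun j hj => hφ0 j (x i) (hxsep i j hj)
    have h2 : ∑ᶠ j : ↥J, φ j (x i) = φ i (x i) := finsum_eq_single (fun j => φ j (x i)) i h1
    show (∑ᶠ j : ↥J, φ j (x i)) = 1
    rw [h2, hφx i]
  have htend : Tendsto (fun F : Finset ↥J => fF F) atTop (𝓝 g) := by
    rw [ContinuousMap.tendsto_iff_forall_isCompact_tendstoUniformlyOn]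
    intro K hK
    have hfin : {i : ↥J | (V (i : ιW) ∩ K).Nonempty}.Finite :=
      hVlfκ.finite_nonempty_inter_compact hK
    have hev : ∀ᶠ F : Finset ↥J in atTop, ∀ w ∈ K, fF F w = g w := by
      filter_upwards [eventually_ge_atTop hfin.toFinset] with F hF w hw
      have hsupp : (support fun i : ↥J => φ i w) ⊆ ↑F := by
        intro i hi
        exact hF (hfin.mem_toFinset.2 ⟨w, hφsupp i hi, hw⟩)
      have hgw : g w = ∑ i ∈ F, φ i w :=
        finsum_eq_sum_of_support_subset (fun i : ↥J => φ i w) hsupp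
      rw [hfFapp, hgw]
    intro U hU
    filter_upwards [hev] with F hF w hw
    rw [hF w hw]
    exact refl_mem_uniformity hU
  have hgcl : g ∈ closure A :=
    mem_closure_of_tendsto htend (Eventually.of_forall fun F => ⟨F, rfl⟩)
  obtain ⟨u, huA, hu⟩ := hAng.2 A hclA g hgcl
  choose Fn hFn using fun n => huA n
  have hiF : ∀ i : ↥J, ∃ n, i ∈ Fn n := by
    intro i
    have hev : Tendsto (fun n => u n (x i)) atTop (𝓝 (g (x i))) :=
      ((continuous_eval_const (x i)).tendsto g).comp hu
    rw [hgx i] at hev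
    obtain ⟨n, hn⟩ := (Metric.tendsto_nhds.1 hev 1 one_pos).exists
    refine ⟨n, ?_⟩
    by_contra hiFn
    have hz : u n (x i) = 0 := by
      rw [← hFn n, hfFapp]
      refine Finset.sum_eq_zero fun j hj => ?_
      refine hφ0 j (x i) (hxsep i j fun hji => hiFn (hji ▸ hj))
    rw [hz] at hn
    simp [Real.dist_eq] at hn
  choose nF hnF using hiF
  have hcnt : Countable ↥J := by
    have hsub : (univ : Set ↥J) ⊆ ⋃ n, (Fn n : Set ↥J) := fun i _ => mem_iUnion.2 ⟨nF i, hnF i⟩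
    have hcu : (univ : Set ↥J).Countable :=
      (countable_iUnion fun n => (Fn n).countable_toSet).mono hsub
    exact countable_univ_iff.1 hcu
  exact hκunc hcnt


end StatementTwoAux

/-- For a paracompact Čech-complete (Tychonoff) space `X`,
`C_k(X)` is angelic iff `X` is Lindelöf.  Čech-completeness is expressed as:
the range of the canonical map `X → βX` is a Gδ set. -/
theorem statement2 (X : Type*) [TopologicalSpace X] [T35Space X] [ParacompactSpace X]
    (hX : IsGδ (Set.range (stoneCechUnit : X → StoneCech X))) :
    Angelic C(X, ℝ) ↔ LindelofSpace X := by
  constructor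
  · intro h
    by_contra hnl
    exact my_not_angelic_of_not_lindelof hnl h
  · intro hL
    exact my_angelic_of_lindelof hX hL
end

section
/- Let X be an Ascoli space. If C_k(X) has a compact resolution swallowing the compact sets of C_k(X), then X admits an Ascoli uniformity 𝒰 with a G-base. -/
open Set Filter Topology Uniformity

/-- If `X` is an Ascoli space and `C_k(X)` has a compact
resolution swallowing its compact sets, then `X` admits an Ascoli uniformity
with a G-base. -/
theorem statement3 (X : Type*) [TopologicalSpace X] [T35Space X]
    (hX : AscoliSpace X) (h : CompactResolutionSwallowing C(X, ℝ)) :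
    ∃ u : UniformSpace X, IsAscoliUniformity X u ∧ UniformityHasGBase X u := by
  classical
  obtain ⟨K, ⟨hKc, -, hKmono⟩, hsw⟩ := h
  set U : (ℕ → ℕ) → Set (X × X) := fun α =>
    {p : X × X | ∀ f ∈ K (fun n => α (n + 1)), |f p.1 - f p.2| < 1 / (α 0 + 1)} with hUdef
  have hpos : ∀ α : ℕ → ℕ, (0 : ℝ) < 1 / ((α 0 : ℝ) + 1) := fun α => by positivity
  have hUmono : ∀ α β : ℕ → ℕ, α ≤ β → U β ⊆ U α := by
    intro α β hab p hp f hf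
    have h1 : (1 : ℝ) / ((β 0 : ℝ) + 1) ≤ 1 / ((α 0 : ℝ) + 1) := by
      apply one_div_le_one_div_of_le
      · positivity
      · have : (α 0 : ℝ) ≤ (β 0 : ℝ) := by exact_mod_cast hab 0
        linarith
    exact lt_of_lt_of_le
      (hp f (hKmono (fun n => α (n + 1)) (fun n => β (n + 1)) (fun n => hab (n + 1)) hf)) h1
  have hdir : Directed (· ≥ ·) fun α : ℕ → ℕ => (𝓟 (U α) : Filter (X × X)) := by
    intro α β
    exact ⟨fun n => max (α n) (β n),
      Filter.principal_mono.mpr (hUmono _ _ fun n => le_max_left _ _),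
      Filter.principal_mono.mpr (hUmono _ _ fun n => le_max_right _ _)⟩
  set F : Filter (X × X) := ⨅ α : ℕ → ℕ, 𝓟 (U α) with hFdef
  have hmemF : ∀ s : Set (X × X), s ∈ F ↔ ∃ α, U α ⊆ s := by
    intro s
    rw [hFdef, Filter.mem_iInf_of_directed hdir]
    simp only [Filter.mem_principal]
  have hUF : ∀ α, U α ∈ F := fun α => (hmemF _).2 ⟨α, subset_rfl⟩
  -- reflexivity
  have hrefl : ∀ r ∈ F, ∀ x : X, (x, x) ∈ r := by
    intro r hr x
    obtain ⟨α, hα⟩ := (hmemF r).1 hr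
    refine hα fun f hf => ?_
    simpa using hpos α
  -- symmetry
  have hsymm : ∀ r ∈ F, Prod.swap ⁻¹' r ∈ F := by
    intro r hr
    obtain ⟨α, hα⟩ := (hmemF r).1 hr
    refine (hmemF _).2 ⟨α, fun p hp => hα fun f hf => ?_⟩
    have := hp f hf
    rw [abs_sub_comm]
    exact this
  -- composition
  have hcomp : ∀ r ∈ F, ∃ t ∈ F, SetRel.comp t t ⊆ r := by
    intro r hr
    obtain ⟨α, hα⟩ := (hmemF r).1 hr
    set β : ℕ → ℕ := fun n => if n = 0 then 2 * α 0 + 1 else α n with hβ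
    have htail : (fun n => β (n + 1)) = fun n => α (n + 1) := by
      funext n; simp [hβ]
    have hβ0 : β 0 = 2 * α 0 + 1 := by simp [hβ]
    refine ⟨U β, hUF β, ?_⟩
    rintro ⟨x, z⟩ ⟨y, hxy, hyz⟩
    refine hα fun f hf => ?_
    have hf' : f ∈ K fun n => β (n + 1) := by rw [htail]; exact hf
    have h1 := hxy f hf'
    have h2 := hyz f hf'
    have hkey : (1 : ℝ) / ((β 0 : ℝ) + 1) + 1 / ((β 0 : ℝ) + 1) = 1 / ((α 0 : ℝ) + 1) := by
      rw [hβ0]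
      have h0 : ((α 0 : ℝ) + 1) > 0 := by positivity
      push_cast
      field_simp
      ring
    calc |f x - f z| ≤ |f x - f y| + |f y - f z| := abs_sub_le _ _ _
      _ < 1 / ((β 0 : ℝ) + 1) + 1 / ((β 0 : ℝ) + 1) := add_lt_add h1 h2
      _ = 1 / ((α 0 : ℝ) + 1) := hkey
  set core : UniformSpace.Core X := UniformSpace.Core.mk' F hrefl hsymm hcomp with hcore
  -- the Ascoli direction: each "ball" is a neighborhood
  have hball : ∀ (x : X) (α : ℕ → ℕ), Prod.mk x ⁻¹' U α ∈ 𝓝 x := by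
    intro x α
    set Kα : Set C(X, ℝ) := K (fun n => α (n + 1)) with hKα
    have hKαc : IsCompact Kα := hKc _
    have hcont := hX Kα hKαc
    set ε : ℝ := 1 / ((α 0 : ℝ) + 1) with hε
    have hεpos : 0 < ε := hpos α
    have hcont2 : Continuous fun p : ↥Kα × X => |(p.1 : C(X, ℝ)) p.2 - (p.1 : C(X, ℝ)) x| :=
      ((hcont.sub (hcont.comp (continuous_fst.prodMk continuous_const)))).abs
    have hopen : IsOpen {p : ↥Kα × X | |(p.1 : C(X, ℝ)) p.2 - (p.1 : C(X, ℝ)) x| < ε} :=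
      isOpen_lt hcont2 continuous_const
    have hsub : (Set.univ : Set ↥Kα) ×ˢ ({x} : Set X) ⊆
        {p : ↥Kα × X | |(p.1 : C(X, ℝ)) p.2 - (p.1 : C(X, ℝ)) x| < ε} := by
      rintro ⟨f, y⟩ ⟨-, hy⟩
      rcases hy with rfl
      simpa using hεpos
    obtain ⟨u', v, -, hvo, hu', hv, huv⟩ :=
      generalized_tube_lemma (isCompact_iff_isCompact_univ.mp hKαc) isCompact_singleton
        hopen hsub
    refine Filter.mem_of_superset (hvo.mem_nhds (hv rfl)) ?_
    intro y hy f hf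
    have hmem : ((⟨⟨f, hf⟩, y⟩ : ↥Kα × X)) ∈ u' ×ˢ v := ⟨hu' (Set.mem_univ _), hy⟩
    have h3 := huv hmem
    rw [abs_sub_comm]
    exact h3
  -- the complete-regularity direction
  have hball2 : ∀ x : X, ∀ V ∈ 𝓝 x, ∃ α, Prod.mk x ⁻¹' U α ⊆ V := by
    intro x V hV
    obtain ⟨W, hWV, hWo, hxW⟩ := mem_nhds_iff.mp hV
    obtain ⟨f, hfc, hfx, hfW⟩ :=
      CompletelyRegularSpace.completely_regular x Wᶜ hWo.isClosed_compl (by simp [hxW])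
    set g : C(X, ℝ) := ⟨fun y => (f y : ℝ), continuous_subtype_val.comp hfc⟩ with hg
    obtain ⟨β, hβ⟩ := hsw {g} isCompact_singleton
    refine ⟨fun m => Nat.casesOn m 1 β, fun y hy => hWV ?_⟩
    by_contra hyW
    have hgK : g ∈ K fun n => (fun m => Nat.casesOn m 1 β) (n + 1) := hβ rfl
    have hgxy := hy g hgK
    have hgx : g x = 0 := by
      simp only [hg, ContinuousMap.coe_mk, hfx]
      norm_num
    have hgy : g y = 1 := by
      simp only [hg, ContinuousMap.coe_mk, hfW hyW]
      norm_num
    rw [hgx, hgy] at hgxy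
    norm_num at hgxy
  -- the two topologies coincide
  have hnhds : ∀ x : X, 𝓝 x = Filter.comap (Prod.mk x) F := by
    intro x
    apply le_antisymm
    · rw [hFdef, Filter.comap_iInf]
      refine le_iInf fun α => ?_
      rw [Filter.comap_principal, Filter.le_principal_iff]
      exact hball x α
    · rw [Filter.le_def]
      intro V hV
      obtain ⟨α, hα⟩ := hball2 x V hV
      exact Filter.mem_comap.2 ⟨U α, hUF α, hα⟩
  have htopeq : (inferInstance : TopologicalSpace X) = core.toTopologicalSpace := by
    apply TopologicalSpace.ext_nhds
    intro x
    rw [UniformSpace.Core.nhds_toTopologicalSpace]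
    exact hnhds x
  refine ⟨UniformSpace.ofCoreEq core _ htopeq, ⟨rfl, ?_⟩, U, ?_, hUmono, ?_⟩
  · intro C hC ε hε
    obtain ⟨β, hβ⟩ := hsw C hC
    obtain ⟨n, hn⟩ := exists_nat_one_div_lt hε
    have hmem : U (fun m => Nat.casesOn m n β) ∈ 𝓤[UniformSpace.ofCoreEq core _ htopeq] := by
      show U (fun m => Nat.casesOn m n β) ∈ core.uniformity
      exact hUF _
    refine ⟨U (fun m => Nat.casesOn m n β), hmem, ?_⟩
    intro f hf p hp
    have hfK : f ∈ K fun m => (fun m => Nat.casesOn m n β) (m + 1) := hβ hf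
    have := hp f hfK
    calc |f p.1 - f p.2| < 1 / ((n : ℝ) + 1) := this
      _ < ε := hn
  · intro α
    show U α ∈ core.uniformity
    exact hUF α
  · intro V hV
    exact (hmemF V).1 hV
end

section
/- Every metrizable topological space is of ℕ^ℕ-uniformly compact type. -/
open Set Filter Topology Uniformity

/-- Every metrizable space is of `ℕ^ℕ`-uniformly compact type. -/
theorem statement4 (X : Type*) [TopologicalSpace X] [TopologicalSpace.MetrizableSpace X] :
    UniformlyCompactType X := by
  letI := TopologicalSpace.metrizableSpaceMetric X
  intro K hK
  refine ⟨fun α => ⋃ k ∈ K, Metric.ball k (1/(α 0 + 1)) ×ˢ Metric.ball k (1/(α 0 + 1)),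
    ?_, ?_, ?_⟩
  · intro α
    constructor
    · exact isOpen_biUnion fun k _ => Metric.isOpen_ball.prod Metric.isOpen_ball
    · rintro _ ⟨x, hx, rfl⟩
      exact Set.mem_biUnion hx ⟨Metric.mem_ball_self (by positivity),
        Metric.mem_ball_self (by positivity)⟩
  · intro α β hab
    refine Set.iUnion₂_mono fun k _ => ?_
    have h : (1:ℝ)/(β 0 + 1) ≤ 1/(α 0 + 1) := by
      apply one_div_le_one_div_of_le (by positivity)
      have := (Nat.cast_le (α := ℝ)).2 (hab 0)
      linarith
    exact Set.prod_mono (Metric.ball_subset_ball h) (Metric.ball_subset_ball h)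
  · intro V hV hVK
    have hball : ∀ k ∈ K, ∃ ε > 0, Metric.ball (k,k) ε ⊆ V := fun k hk =>
      Metric.isOpen_iff.mp hV (k,k) (hVK ⟨k, hk, rfl⟩)
    choose! c hc hcV using hball
    obtain ⟨b, hbK, hbfin, hbcov⟩ := hK.elim_finite_subcover_image
      (fun k (_ : k ∈ K) => Metric.isOpen_ball (x := k) (ε := c k / 2))
      (fun x hx => Set.mem_biUnion hx (Metric.mem_ball_self (by linarith [hc x hx])))
    rcases b.eq_empty_or_nonempty with rfl | hbne
    · -- then K = ∅
      have hKe : K = ∅ := by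
        apply Set.eq_empty_of_subset_empty
        simpa using hbcov
      exact ⟨fun _ => 0, by simp [hKe]⟩
    · lift b to Finset X using hbfin with t ht
      have htne : t.Nonempty := by
        rcases hbne with ⟨x, hx⟩; exact ⟨x, by simpa using hx⟩
      set ε := t.inf' htne (fun k => c k / 2) with hε
      have hεpos : 0 < ε := by
        rw [hε, Finset.lt_inf'_iff]
        intro k hk
        have : k ∈ K := hbK (by simpa using hk)
        linarith [hc k this]
      obtain ⟨n, hn⟩ := exists_nat_one_div_lt hεpos
      refine ⟨fun _ => n, ?_⟩
      rintro ⟨x, y⟩ hxy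
      simp only [Set.mem_iUnion] at hxy
      obtain ⟨k, hkK, hxk, hyk⟩ := hxy
      have hkcov := hbcov hkK
      simp only [Set.mem_iUnion] at hkcov
      obtain ⟨k', hk't, hkball⟩ := hkcov
      have hk't' : k' ∈ t := by simpa using hk't
      have hk'K : k' ∈ K := hbK hk't
      have hεle : ε ≤ c k' / 2 := Finset.inf'_le _ hk't'
      have hδ : (1:ℝ)/(n+1) < c k' / 2 := lt_of_lt_of_le hn hεle
      have hkk' : dist k k' < c k' / 2 := hkball
      have hx' : dist x k' < c k' := by
        calc dist x k' ≤ dist x k + dist k k' := dist_triangle _ _ _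
        _ < 1/(n+1) + c k'/2 := by
            have : dist x k < 1/(n+1) := by simpa using hxk
            linarith
        _ < c k' := by linarith
      have hy' : dist y k' < c k' := by
        calc dist y k' ≤ dist y k + dist k k' := dist_triangle _ _ _
        _ < 1/(n+1) + c k'/2 := by
            have : dist y k < 1/(n+1) := by simpa using hyk
            linarith
        _ < c k' := by linarith
      apply hcV k' hk'K
      rw [Metric.mem_ball, Prod.dist_eq]
      exact max_lt hx' hy'
end

section
/- Let X be a countable Tychonoff space such that every point x ∈ X has a G-base of neighborhoods. Then X is of ℕ^ℕ-uniformly compact type. -/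
open Set Filter Topology Uniformity

/-- A countable Tychonoff space with a G-base at every point is of
`ℕ^ℕ`-uniformly compact type. -/
theorem statement5 (X : Type*) [TopologicalSpace X] [T35Space X] [Countable X]
    (h : ∀ x : X, GBaseAt X x) : UniformlyCompactType X := by
  classical
  obtain ⟨f, hf⟩ : ∃ f : X → ℕ, Function.Injective f := exists_injective_nat X
  choose U hU1 hU2 hU3 using h
  intro K _hK
  set γ : X → (ℕ → ℕ) → (ℕ → ℕ) := fun x α k => α (Nat.pairEquiv (f x, k)) with hγ
  refine ⟨fun α => ⋃ x ∈ K, interior (U x (γ x α)) ×ˢ interior (U x (γ x α)), ?_, ?_, ?_⟩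
  · intro α
    constructor
    · exact isOpen_biUnion fun x _ => isOpen_interior.prod isOpen_interior
    · rintro _ ⟨x, hx, rfl⟩
      exact Set.mem_biUnion hx ⟨mem_interior_iff_mem_nhds.2 (hU1 x _),
        mem_interior_iff_mem_nhds.2 (hU1 x _)⟩
  · intro α β hab
    refine Set.iUnion₂_mono fun x hx => ?_
    have hmono : γ x α ≤ γ x β := fun k => hab _
    have := interior_mono (hU2 x _ _ hmono)
    exact Set.prod_mono this this
  · intro V hV hKV
    have key : ∀ x : X, ∃ d : ℕ → ℕ, x ∈ K → U x d ×ˢ U x d ⊆ V := by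
      intro x
      by_cases hx : x ∈ K
      · have hxV : V ∈ nhds (x, x) := hV.mem_nhds (hKV ⟨x, hx, rfl⟩)
        rw [mem_nhds_prod_iff] at hxV
        obtain ⟨N1, hN1, N2, hN2, hNV⟩ := hxV
        obtain ⟨d, hd⟩ := hU3 x (N1 ∩ N2) (Filter.inter_mem hN1 hN2)
        refine ⟨d, fun _ => ?_⟩
        exact fun p hp => hNV ⟨(hd hp.1).1, (hd hp.2).2⟩
      · exact ⟨fun _ => 0, fun hx' => absurd hx' hx⟩
    choose δ hδ using key
    refine ⟨fun m => if hm : ∃ x : X, f x = (Nat.pairEquiv.symm m).1 then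
      δ hm.choose ((Nat.pairEquiv.symm m).2) else 0, ?_⟩
    intro p hp
    simp only [Set.mem_iUnion] at hp
    obtain ⟨x, hx, hpmem⟩ := hp
    have hγeq : γ x (fun m => if hm : ∃ x : X, f x = (Nat.pairEquiv.symm m).1 then
        δ hm.choose ((Nat.pairEquiv.symm m).2) else 0) = δ x := by
      funext k
      have hsymm : (Nat.pairEquiv.symm (Nat.pairEquiv (f x, k))) = (f x, k) :=
        Nat.pairEquiv.symm_apply_apply _
      simp only [hγ, hsymm]
      have hex : ∃ x' : X, f x' = (f x, k).1 := ⟨x, rfl⟩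
      rw [dif_pos hex]
      have : hex.choose = x := hf hex.choose_spec
      rw [this]
    rw [hγeq] at hpmem
    exact hδ x hx ⟨interior_subset hpmem.1, interior_subset hpmem.2⟩
end

section
/- Let X be a σ-compact Tychonoff space admitting an Ascoli uniformity 𝒰 with a G-base. Then C_k(X) has a compact resolution swallowing the compact sets of C_k(X). -/
open Set Filter Topology Uniformity

/-- If `X` is a σ-compact Tychonoff space admitting an Ascoli
uniformity with a G-base, then `C_k(X)` has a compact resolution swallowing
the compact sets of `C_k(X)`. -/
theorem statement6 (X : Type*) [TopologicalSpace X] [T35Space X] [SigmaCompactSpace X]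
    (u : UniformSpace X) (hu : IsAscoliUniformity X u) (hGB : UniformityHasGBase X u) :
    CompactResolutionSwallowing C(X, ℝ) := by
  obtain ⟨U, hUmem, hUanti, hUbasis⟩ := hGB
  obtain ⟨hut, hAsc⟩ := hu
  -- entourages give neighborhoods in the topology of `X`
  have hball : ∀ {W : Set (X × X)}, W ∈ 𝓤[u] → ∀ x : X, {y | (x, y) ∈ W} ∈ 𝓝 x := by
    intro W hW x
    have h := @UniformSpace.ball_mem_nhds X u x W hW
    rwa [hut] at h
  -- the candidate resolution, as sets of bare functions
  set S : (ℕ → ℕ) → Set (X → ℝ) := fun α =>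
    {g | (∀ n : ℕ, ∀ x ∈ compactCovering X n, |g x| ≤ (α (2 * n) : ℝ)) ∧
      ∀ n : ℕ, ∀ p ∈ U (fun m => α (2 * Nat.pair n m + 1)),
        |g p.1 - g p.2| ≤ 1 / ((n : ℝ) + 1)} with hS
  set K : (ℕ → ℕ) → Set C(X, ℝ) := fun α => {f | ⇑f ∈ S α} with hK
  -- every member of `S α` is continuous
  have hScont : ∀ α : ℕ → ℕ, ∀ g ∈ S α, Continuous g := by
    intro α g hg
    rw [continuous_iff_continuousAt]
    intro x
    rw [ContinuousAt, Metric.tendsto_nhds]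
    intro ε hε
    obtain ⟨n, hn⟩ := exists_nat_one_div_lt hε
    filter_upwards [hball (hUmem (fun m => α (2 * Nat.pair n m + 1))) x] with y hy
    have h := hg.2 n (x, y) hy
    calc dist (g y) (g x) = |g x - g y| := by rw [dist_comm, Real.dist_eq]
      _ ≤ 1 / ((n : ℝ) + 1) := h
      _ < ε := hn
  -- each `K α` is compact
  have hKcomp : ∀ α : ℕ → ℕ, IsCompact (K α) := by
    intro α
    apply ArzelaAscoli.isCompact_of_equicontinuous
    · -- the image in `X → ℝ` is `S α`, which is compact
      have himg : ContinuousMap.toFun '' K α = S α := by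
        ext g
        constructor
        · rintro ⟨f, hf, rfl⟩; exact hf
        · intro hg; exact ⟨⟨g, hScont α g hg⟩, hg, rfl⟩
      rw [himg]
      -- `S α` is closed
      have hcl : IsClosed (S α) := by
        have hrw : S α = (⋂ n : ℕ, ⋂ x ∈ compactCovering X n,
            {g : X → ℝ | |g x| ≤ (α (2 * n) : ℝ)}) ∩
            ⋂ n : ℕ, ⋂ p ∈ U (fun m => α (2 * Nat.pair n m + 1)),
              {g : X → ℝ | |g p.1 - g p.2| ≤ 1 / ((n : ℝ) + 1)} := by
          ext g
          simp only [hS, mem_setOf_eq, mem_inter_iff, mem_iInter]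
        rw [hrw]
        apply IsClosed.inter
        · exact isClosed_iInter fun n => isClosed_iInter fun x => isClosed_iInter fun _ =>
            isClosed_le ((continuous_apply x).abs) continuous_const
        · exact isClosed_iInter fun n => isClosed_iInter fun p => isClosed_iInter fun _ =>
            isClosed_le (((continuous_apply p.1).sub (continuous_apply p.2)).abs)
              continuous_const
      -- `S α` lies inside a compact product of intervals
      have hnx : ∀ x : X, ∃ n : ℕ, x ∈ compactCovering X n := fun x =>
        exists_mem_compactCovering x
      choose nx hnx using hnx
      refine IsCompact.of_isClosed_subset
        (isCompact_univ_pi (fun x : X => isCompact_Icc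
          (a := -(α (2 * nx x) : ℝ)) (b := (α (2 * nx x) : ℝ)))) hcl ?_
      intro g hg
      rw [mem_univ_pi]
      intro x
      exact abs_le.1 (hg.1 (nx x) x (hnx x))
    · -- equicontinuity
      intro x W hW
      obtain ⟨ε, hε, hW'⟩ := Metric.mem_uniformity_dist.1 hW
      obtain ⟨n, hn⟩ := exists_nat_one_div_lt hε
      filter_upwards [hball (hUmem (fun m => α (2 * Nat.pair n m + 1))) x] with y hy
      intro f
      apply hW'
      rw [Real.dist_eq]
      exact lt_of_le_of_lt (f.2.2 n (x, y) hy) hn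
  -- monotonicity
  have hKmono : ∀ α β : ℕ → ℕ, α ≤ β → K α ⊆ K β := by
    intro α β hab f hf
    refine ⟨fun n x hx => ?_, fun n p hp => ?_⟩
    · exact le_trans (hf.1 n x hx) (Nat.cast_le.2 (hab (2 * n)))
    · exact hf.2 n p (hUanti _ _ (fun m => hab (2 * Nat.pair n m + 1)) hp)
  -- swallowing
  have hswallow : ∀ C : Set C(X, ℝ), IsCompact C → ∃ α, C ⊆ K α := by
    intro C hC
    -- pointwise bounds
    have hbnd : ∀ x : X, ∃ M : ℝ, ∀ f ∈ C, |f x| ≤ M := by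
      intro x
      obtain ⟨M, hM⟩ := hC.exists_bound_of_continuousOn
        (f := fun f : C(X, ℝ) => f x) (continuous_eval_const x).continuousOn
      exact ⟨M, fun f hf => by simpa [Real.norm_eq_abs] using hM f hf⟩
    choose b hb using hbnd
    -- uniform equicontinuity entourages
    obtain ⟨V1, hV1u, hV1⟩ := hAsc C hC 1 one_pos
    have hγ : ∀ n : ℕ, ∃ γ : ℕ → ℕ, ∀ f ∈ C, ∀ p ∈ U γ,
        |f p.1 - f p.2| < 1 / ((n : ℝ) + 1) := by
      intro n
      obtain ⟨V, hVu, hV⟩ := hAsc C hC (1 / ((n : ℝ) + 1)) (by positivity)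
      obtain ⟨γ, hγ⟩ := hUbasis V hVu
      exact ⟨γ, fun f hf p hp => hV f hf p (hγ hp)⟩
    choose γ hγ using hγ
    -- uniform bounds on the compact pieces
    have hMn : ∀ n : ℕ, ∃ M : ℕ, ∀ f ∈ C, ∀ x ∈ compactCovering X n, |f x| ≤ (M : ℝ) := by
      intro n
      obtain ⟨t, hts, hcov⟩ := (isCompact_compactCovering X n).elim_nhds_subcover
        (fun z => {y | (z, y) ∈ V1}) (fun z _ => hball hV1u z)
      refine ⟨t.sup (fun z => ⌈b z⌉₊) + 1, fun f hf x hx => ?_⟩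
      obtain ⟨z, hz, hzx⟩ := mem_iUnion₂.1 (hcov hx)
      have h1 : |f z - f x| < 1 := hV1 f hf (z, x) hzx
      have h2 : |f x| ≤ |f z| + |f z - f x| := by
        have := abs_sub_abs_le_abs_sub (f x) (f z)
        have habs : |f x - f z| = |f z - f x| := abs_sub_comm _ _
        linarith [abs_nonneg (f z - f x)]
      have h3 : |f z| ≤ (⌈b z⌉₊ : ℝ) := le_trans (hb z f hf) (Nat.le_ceil _)
      have h4' : ⌈b z⌉₊ ≤ t.sup (fun z => ⌈b z⌉₊) := Finset.le_sup (f := fun z => ⌈b z⌉₊) hz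
      have h4 : ((⌈b z⌉₊ : ℕ) : ℝ) ≤ ((t.sup (fun z => ⌈b z⌉₊) : ℕ) : ℝ) := Nat.cast_le.2 h4'
      push_cast
      linarith
    choose M hM using hMn
    refine ⟨fun k => if k % 2 = 0 then M (k / 2)
      else γ (Nat.unpair (k / 2)).1 (Nat.unpair (k / 2)).2, fun f hf => ⟨?_, ?_⟩⟩
    · intro n x hx
      have h1 : (2 * n) % 2 = 0 := by omega
      have h2 : (2 * n) / 2 = n := by omega
      simp only [h1, h2, if_pos rfl]
      exact hM n f hf x hx
    · intro n p hp
      have hfun : (fun m => (fun k => if k % 2 = 0 then M (k / 2)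
          else γ (Nat.unpair (k / 2)).1 (Nat.unpair (k / 2)).2) (2 * Nat.pair n m + 1))
          = γ n := by
        funext m
        have h1 : (2 * Nat.pair n m + 1) % 2 ≠ 0 := by omega
        have h2 : (2 * Nat.pair n m + 1) / 2 = Nat.pair n m := by omega
        simp only [h2, Nat.unpair_pair, if_neg h1]
      rw [hfun] at hp
      exact (hγ n f hf p hp).le
  -- assemble
  refine ⟨K, ⟨hKcomp, ?_, hKmono⟩, hswallow⟩
  rw [eq_univ_iff_forall]
  intro f
  obtain ⟨α, hα⟩ := hswallow {f} isCompact_singleton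
  exact mem_iUnion.2 ⟨α, hα rfl⟩
end

section
/- Let X be a σ-compact Ascoli space of ℕ^ℕ-uniformly compact type. Then C_k(X) has a compact resolution swallowing the compact sets of C_k(X). -/
open Set Filter Topology Uniformity

section AuxStatement7

variable {X : Type*} [TopologicalSpace X]

/-- Auxiliary set of (not necessarily continuous) functions used in the resolution. -/
def SAux (C : ℕ → Set X) (U : ℕ → (ℕ → ℕ) → Set (X × X)) (α : ℕ → ℕ) : Set (X → ℝ) :=
  {g | (∀ n, ∀ x ∈ C n, |g x| ≤ (α (2 * n) : ℝ)) ∧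
    ∀ n m : ℕ, ∀ p ∈ U n (fun k => α (2 * Nat.pair n (Nat.pair m k) + 1)),
      |g p.1 - g p.2| ≤ 1 / ((m : ℝ) + 1)}

/-- The compact resolution of `C(X, ℝ)`. -/
def KAux (C : ℕ → Set X) (U : ℕ → (ℕ → ℕ) → Set (X × X)) (α : ℕ → ℕ) : Set C(X, ℝ) :=
  {f | ⇑f ∈ SAux C U α}

theorem statement7_aux_cont (C : ℕ → Set X) (U : ℕ → (ℕ → ℕ) → Set (X × X))
    (hCcover : ∀ x : X, ∃ n, x ∈ C n)
    (hU1 : ∀ n γ, IsOpen (U n γ) ∧ (fun x => (x, x)) '' C n ⊆ U n γ)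
    (α : ℕ → ℕ) {g : X → ℝ} (hg : g ∈ SAux C U α) : Continuous g := by
  rw [continuous_iff_continuousAt]
  intro x
  obtain ⟨n, hn⟩ := hCcover x
  refine Metric.tendsto_nhds.mpr fun ε hε => ?_
  obtain ⟨m, hm⟩ := exists_nat_one_div_lt hε
  have hWopen : IsOpen {y : X | (x, y) ∈ U n (fun k => α (2 * Nat.pair n (Nat.pair m k) + 1))} :=
    (hU1 n _).1.preimage (Continuous.prodMk_right x)
  have hWmem : x ∈ {y : X | (x, y) ∈ U n (fun k => α (2 * Nat.pair n (Nat.pair m k) + 1))} :=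
    (hU1 n _).2 ⟨x, hn, rfl⟩
  filter_upwards [hWopen.mem_nhds hWmem] with y hy
  have h1 : |g x - g y| ≤ 1 / ((m : ℝ) + 1) := hg.2 n m (x, y) hy
  rw [Real.dist_eq, abs_sub_comm]
  exact lt_of_le_of_lt h1 hm

theorem statement7_aux_compact (C : ℕ → Set X) (U : ℕ → (ℕ → ℕ) → Set (X × X))
    (hCcover : ∀ x : X, ∃ n, x ∈ C n)
    (hU1 : ∀ n γ, IsOpen (U n γ) ∧ (fun x => (x, x)) '' C n ⊆ U n γ)
    (α : ℕ → ℕ) : IsCompact (KAux C U α) := by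
  classical
  -- closedness of `SAux` in the product topology
  have hSclosed : IsClosed (SAux C U α) := by
    have heq : SAux C U α =
        (⋂ n, ⋂ x ∈ C n, {g : X → ℝ | |g x| ≤ (α (2 * n) : ℝ)}) ∩
        (⋂ n, ⋂ m, ⋂ p ∈ U n (fun k => α (2 * Nat.pair n (Nat.pair m k) + 1)),
          {g : X → ℝ | |g p.1 - g p.2| ≤ 1 / ((m : ℝ) + 1)}) := by
      ext g
      simp only [SAux, Set.mem_setOf_eq, Set.mem_inter_iff, Set.mem_iInter]
    rw [heq]
    refine IsClosed.inter ?_ ?_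
    · exact isClosed_iInter fun n => isClosed_biInter fun x _ =>
        isClosed_le ((continuous_apply x).abs) continuous_const
    · exact isClosed_iInter fun n => isClosed_iInter fun m => isClosed_biInter fun p _ =>
        isClosed_le (((continuous_apply p.1).sub (continuous_apply p.2)).abs) continuous_const
  -- the image of `KAux` under the coercion is `SAux`
  have himg : ContinuousMap.toFun '' (KAux C U α) = SAux C U α := by
    ext g
    constructor
    · rintro ⟨f, hf, rfl⟩; exact hf
    · intro hg
      exact ⟨⟨g, statement7_aux_cont C U hCcover hU1 α hg⟩, hg, rfl⟩
  choose nx hnx using fun x => hCcover x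
  have hsub : SAux C U α ⊆
      Set.pi Set.univ (fun x => Set.Icc (-(α (2 * nx x) : ℝ)) ((α (2 * nx x) : ℝ))) := by
    intro g hg x _
    have hb := hg.1 (nx x) x (hnx x)
    rw [Set.mem_Icc]
    exact ⟨(abs_le.mp hb).1, (abs_le.mp hb).2⟩
  have hS1 : IsCompact (ContinuousMap.toFun '' (KAux C U α)) := by
    rw [himg]
    exact IsCompact.of_isClosed_subset (isCompact_univ_pi fun x => isCompact_Icc) hSclosed hsub
  have hS2 : Equicontinuous ((↑) : (KAux C U α) → X → ℝ) := by
    intro x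
    obtain ⟨n, hn⟩ := hCcover x
    intro V hV
    obtain ⟨ε, hε, hball⟩ := Metric.mem_uniformity_dist.mp hV
    obtain ⟨m, hm⟩ := exists_nat_one_div_lt hε
    have hWopen : IsOpen {y : X | (x, y) ∈ U n (fun k => α (2 * Nat.pair n (Nat.pair m k) + 1))} :=
      (hU1 n _).1.preimage (Continuous.prodMk_right x)
    have hWmem : x ∈ {y : X | (x, y) ∈ U n (fun k => α (2 * Nat.pair n (Nat.pair m k) + 1))} :=
      (hU1 n _).2 ⟨x, hn, rfl⟩
    filter_upwards [hWopen.mem_nhds hWmem] with y hy f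
    refine hball ?_
    rw [Real.dist_eq]
    exact lt_of_le_of_lt (f.2.2 n m (x, y) hy) hm
  exact ArzelaAscoli.isCompact_of_equicontinuous (KAux C U α) hS1 hS2

end AuxStatement7

/-- If `X` is a σ-compact Ascoli space of `ℕ^ℕ`-uniformly compact
type, then `C_k(X)` has a compact resolution swallowing the compact sets of
`C_k(X)`. -/
theorem statement7 (X : Type*) [TopologicalSpace X] [T35Space X] [SigmaCompactSpace X]
    (hX : AscoliSpace X) (h : UniformlyCompactType X) :
    CompactResolutionSwallowing C(X, ℝ) := by
  classical
  set C : ℕ → Set X := compactCovering X with hCdef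
  have hCcomp : ∀ n, IsCompact (C n) := isCompact_compactCovering X
  have hCcover : ∀ x : X, ∃ n, x ∈ C n := by
    intro x
    have : x ∈ ⋃ n, C n := by rw [hCdef, iUnion_compactCovering]; trivial
    exact Set.mem_iUnion.mp this
  choose U hUprop using fun n => h (C n) (hCcomp n)
  have hU1 : ∀ n γ, IsOpen (U n γ) ∧ (fun x => (x, x)) '' C n ⊆ U n γ := fun n => (hUprop n).1
  have hU2 : ∀ n (γ δ : ℕ → ℕ), γ ≤ δ → U n δ ⊆ U n γ := fun n => (hUprop n).2.1
  have hU3 : ∀ n (V : Set (X × X)), IsOpen V → (fun x => (x, x)) '' C n ⊆ V → ∃ γ, U n γ ⊆ V :=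
    fun n => (hUprop n).2.2
  -- swallowing property
  have swallow : ∀ D : Set C(X, ℝ), IsCompact D → ∃ α, D ⊆ KAux C U α := by
    intro D hD
    haveI : CompactSpace ↥D := isCompact_iff_compactSpace.mp hD
    have hev : Continuous fun p : ↥D × X => (p.1 : C(X, ℝ)) p.2 := hX D hD
    -- uniform bounds on each C n
    have hb : ∀ n, ∃ b : ℕ, ∀ f ∈ D, ∀ x ∈ C n, |f x| ≤ (b : ℝ) := by
      intro n
      obtain ⟨M, hM⟩ := ((isCompact_univ.prod (hCcomp n)).image hev).exists_bound_of_continuousOn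
        continuousOn_id
      refine ⟨⌈M⌉₊, fun f hf x hx => ?_⟩
      have : ‖(⟨f, hf⟩ : ↥D).1 x‖ ≤ M := hM _ ⟨(⟨f, hf⟩, x), ⟨Set.mem_univ _, hx⟩, rfl⟩
      calc |f x| ≤ M := this
        _ ≤ (⌈M⌉₊ : ℝ) := Nat.le_ceil M
    -- uniform oscillation control
    have hosc : ∀ n m : ℕ, ∃ B : ℕ → ℕ, ∀ f ∈ D, ∀ p ∈ U n B,
        |f p.1 - f p.2| ≤ 1 / ((m : ℝ) + 1) := by
      intro n m
      have hmpos : (0 : ℝ) < 1 / ((m : ℝ) + 1) := by positivity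
      set g : ↥D × (X × X) → ℝ := fun q => |(q.1 : C(X, ℝ)) q.2.1 - (q.1 : C(X, ℝ)) q.2.2|
        with hgdef
      have hg : Continuous g := by
        apply Continuous.abs
        exact (hev.comp (continuous_fst.prodMk continuous_snd.fst)).sub
          (hev.comp (continuous_fst.prodMk continuous_snd.snd))
      set V : Set (X × X) := {p | ∀ f : ↥D, g (f, p) < 1 / ((m : ℝ) + 1)} with hVdef
      have hVopen : IsOpen V := by
        have hcl : IsClosed {q : ↥D × (X × X) | 1 / ((m : ℝ) + 1) ≤ g q} :=
          isClosed_le continuous_const hg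
        have hclim : IsClosed (Prod.snd '' {q : ↥D × (X × X) | 1 / ((m : ℝ) + 1) ≤ g q}) :=
          isClosedMap_snd_of_compactSpace _ hcl
        have hVeq : V = (Prod.snd '' {q : ↥D × (X × X) | 1 / ((m : ℝ) + 1) ≤ g q})ᶜ := by
          ext p
          constructor
          · rintro hp ⟨⟨f, p'⟩, hq, rfl⟩
            exact absurd hq (not_le.mpr (hp f))
          · intro hp f
            by_contra hc
            exact hp ⟨(f, p), not_lt.mp hc, rfl⟩
        rw [hVeq]
        exact hclim.isOpen_compl
      have hVdiag : (fun x => (x, x)) '' C n ⊆ V := by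
        rintro p ⟨x, _, rfl⟩ f
        simpa [hgdef] using hmpos
      obtain ⟨B, hB⟩ := hU3 n V hVopen hVdiag
      refine ⟨B, fun f hf p hp => ?_⟩
      exact le_of_lt (hB hp (⟨f, hf⟩ : ↥D))
    choose b hbspec using hb
    choose B hBspec using hosc
    set αf : ℕ → ℕ := fun j => if j % 2 = 0 then b (j / 2)
      else B (Nat.unpair ((j - 1) / 2)).1 (Nat.unpair (Nat.unpair ((j - 1) / 2)).2).1
        (Nat.unpair (Nat.unpair ((j - 1) / 2)).2).2 with hαf
    have key1 : ∀ n, αf (2 * n) = b n := by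
      intro n
      have h2n : (2 * n) % 2 = 0 := by omega
      have h2n' : (2 * n) / 2 = n := by omega
      simp only [hαf]
      rw [if_pos h2n, h2n']
    have key2 : ∀ n m, (fun k => αf (2 * Nat.pair n (Nat.pair m k) + 1)) = B n m := by
      intro n m
      funext k
      have h1 : (2 * Nat.pair n (Nat.pair m k) + 1) % 2 ≠ 0 := by omega
      have h2 : (2 * Nat.pair n (Nat.pair m k) + 1 - 1) / 2 = Nat.pair n (Nat.pair m k) := by
        omega
      simp only [hαf]
      rw [if_neg h1, h2, Nat.unpair_pair, Nat.unpair_pair]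
    refine ⟨αf, fun f hf => ?_⟩
    constructor
    · intro n x hx
      rw [key1 n]
      exact hbspec n f hf x hx
    · intro n m p hp
      rw [key2 n m] at hp
      exact hBspec n m f hf p hp
  -- assemble everything
  refine ⟨KAux C U, ⟨fun α => statement7_aux_compact C U hCcover hU1 α, ?_, ?_⟩, swallow⟩
  · rw [Set.eq_univ_iff_forall]
    intro f
    obtain ⟨α, hα⟩ := swallow {f} isCompact_singleton
    exact Set.mem_iUnion.mpr ⟨α, hα rfl⟩
  · intro α α' hle f hf
    refine ⟨fun n x hx => le_trans (hf.1 n x hx) (Nat.cast_le.mpr (hle _)), fun n m p hp => ?_⟩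
    exact hf.2 n m p (hU2 n _ _ (fun k => hle _) hp)
end

section
/- The space C_k(ℚ) of continuous real-valued functions on the rational numbers ℚ (with the topology inherited from ℝ), endowed with the compact-open topology, has a compact resolution swallowing its compact sets. -/
open Set Filter Topology Uniformity

noncomputable section StatementNine

/-- An enumeration of `ℚ`. -/
def qe : ℕ → ℚ := (exists_surjective_nat ℚ).choose

lemma qe_surj : Function.Surjective qe := (exists_surjective_nat ℚ).choose_spec

/-- A right inverse to `qe`. -/
def qp : ℚ → ℕ := fun x => (qe_surj x).choose

lemma qe_qp (x : ℚ) : qe (qp x) = x := (qe_surj x).choose_spec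

/-- The compact resolution of `C_k(ℚ)`. -/
def Kfam (α : ℕ → ℕ) : Set C(ℚ, ℝ) :=
  {f | (∀ n : ℕ, |f (qe n)| ≤ (α (2 * n) : ℝ)) ∧
       ∀ n k : ℕ, ∀ y : ℚ, dist y (qe n) ≤ 1 / ((α (2 * Nat.pair n k + 1) : ℝ) + 1) →
         dist (f y) (f (qe n)) ≤ 1 / ((k : ℝ) + 1)}

lemma Kfam_mono {α β : ℕ → ℕ} (h : α ≤ β) : Kfam α ⊆ Kfam β := by
  rintro f ⟨h1, h2⟩
  refine ⟨fun n => (h1 n).trans (by exact_mod_cast h (2 * n)), fun n k y hy => ?_⟩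
  refine h2 n k y (hy.trans ?_)
  apply one_div_le_one_div_of_le
  · positivity
  · have : ((α (2 * Nat.pair n k + 1) : ℕ) : ℝ) ≤ ((β (2 * Nat.pair n k + 1) : ℕ) : ℝ) := by
      exact_mod_cast h (2 * Nat.pair n k + 1)
    linarith

lemma Kfam_equicontinuous (α : ℕ → ℕ) :
    Equicontinuous ((↑) : (Kfam α) → ℚ → ℝ) := by
  intro x
  rw [Metric.equicontinuousAt_iff]
  intro ε hε
  obtain ⟨n, rfl⟩ := qe_surj x
  obtain ⟨k, hk⟩ := exists_nat_one_div_lt hε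
  refine ⟨1 / ((α (2 * Nat.pair n k + 1) : ℝ) + 1), by positivity, fun y hy f => ?_⟩
  have := f.2.2 n k y hy.le
  calc dist (f.1 (qe n)) (f.1 y) = dist (f.1 y) (f.1 (qe n)) := dist_comm _ _
    _ ≤ 1 / ((k : ℝ) + 1) := this
    _ < ε := hk

/-- The pointwise version of the defining conditions. -/
lemma Kfam_image (α : ℕ → ℕ) :
    ContinuousMap.toFun '' (Kfam α) =
      {g : ℚ → ℝ | (∀ n : ℕ, |g (qe n)| ≤ (α (2 * n) : ℝ)) ∧
       ∀ n k : ℕ, ∀ y : ℚ, dist y (qe n) ≤ 1 / ((α (2 * Nat.pair n k + 1) : ℝ) + 1) →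
         dist (g y) (g (qe n)) ≤ 1 / ((k : ℝ) + 1)} := by
  apply subset_antisymm
  · rintro _ ⟨f, hf, rfl⟩; exact hf
  · rintro g ⟨h1, h2⟩
    have hcont : Continuous g := by
      rw [continuous_iff_continuousAt]
      intro x
      rw [Metric.continuousAt_iff]
      intro ε hε
      obtain ⟨n, rfl⟩ := qe_surj x
      obtain ⟨k, hk⟩ := exists_nat_one_div_lt hε
      refine ⟨1 / ((α (2 * Nat.pair n k + 1) : ℝ) + 1), by positivity, fun {y} hy => ?_⟩
      exact lt_of_le_of_lt (h2 n k y hy.le) hk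
    exact ⟨⟨g, hcont⟩, ⟨h1, h2⟩, rfl⟩

lemma Kfam_isCompact (α : ℕ → ℕ) : IsCompact (Kfam α) := by
  apply ArzelaAscoli.isCompact_of_equicontinuous _ _ (Kfam_equicontinuous α)
  rw [Kfam_image]
  have hsub : {g : ℚ → ℝ | (∀ n : ℕ, |g (qe n)| ≤ (α (2 * n) : ℝ)) ∧
       ∀ n k : ℕ, ∀ y : ℚ, dist y (qe n) ≤ 1 / ((α (2 * Nat.pair n k + 1) : ℝ) + 1) →
         dist (g y) (g (qe n)) ≤ 1 / ((k : ℝ) + 1)} ⊆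
      Set.univ.pi (fun x : ℚ => Set.Icc (-(α (2 * qp x) : ℝ))
        (α (2 * qp x) : ℝ)) := by
    rintro g ⟨h1, _⟩ x _
    have := h1 (qp x)
    rw [qe_qp] at this
    exact abs_le.mp this
  have hclosed : IsClosed {g : ℚ → ℝ | (∀ n : ℕ, |g (qe n)| ≤ (α (2 * n) : ℝ)) ∧
       ∀ n k : ℕ, ∀ y : ℚ, dist y (qe n) ≤ 1 / ((α (2 * Nat.pair n k + 1) : ℝ) + 1) →
         dist (g y) (g (qe n)) ≤ 1 / ((k : ℝ) + 1)} := by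
    rw [Set.setOf_and]
    apply IsClosed.inter
    · rw [setOf_forall]
      refine isClosed_iInter fun n => ?_
      exact isClosed_le (by continuity) continuous_const
    · rw [setOf_forall]
      refine isClosed_iInter fun n => ?_
      rw [setOf_forall]
      refine isClosed_iInter fun k => ?_
      rw [setOf_forall]
      refine isClosed_iInter fun y => ?_
      by_cases hy : dist y (qe n) ≤ 1 / ((α (2 * Nat.pair n k + 1) : ℝ) + 1)
      · simp only [hy, forall_true_left]
        apply isClosed_le _ continuous_const
        exact (continuous_apply y).dist (continuous_apply (qe n))
      · simp only [hy, IsEmpty.forall_iff, setOf_true]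
        exact isClosed_univ
  exact (isCompact_univ_pi fun x => isCompact_Icc).of_isClosed_subset hclosed hsub

/-- Compact subsets of `C_k(ℚ)` are equicontinuous at each point. -/
lemma compact_equicont {C : Set C(ℚ, ℝ)} (hC : IsCompact C) (x : ℚ) {ε : ℝ} (hε : 0 < ε) :
    ∃ δ : ℝ, 0 < δ ∧ ∀ f ∈ C, ∀ y : ℚ, dist y x < δ → dist (f y) (f x) ≤ ε := by
  rcases C.eq_empty_or_nonempty with rfl | ⟨f₀, hf₀⟩
  · exact ⟨1, one_pos, by simp⟩
  by_contra h
  push_neg at h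
  choose F hFC Y hY hY2 using fun j : ℕ => h (1 / ((j : ℝ) + 1)) (by positivity)
  have hYx : Tendsto Y atTop (𝓝 x) := by
    rw [tendsto_iff_dist_tendsto_zero]
    refine squeeze_zero (fun j => dist_nonneg) (fun j => (hY j).le) ?_
    exact tendsto_one_div_add_atTop_nhds_zero_nat
  set S : Set ℚ := insert x (Set.range Y) with hSdef
  have hS : IsCompact S := hYx.isCompact_insert_range
  haveI : CompactSpace S := isCompact_iff_compactSpace.mp hS
  obtain ⟨f, hfC, hf⟩ := hC.exists_mapClusterPt (u := F) (f := atTop)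
    (le_principal_iff.mpr (mem_map.mpr (univ_mem' hFC)))
  -- pass to restrictions on the compact set S
  have hres : MapClusterPt (f.restrict S) atTop (fun j => (F j).restrict S) :=
    hf.continuousAt_comp (ContinuousMap.continuous_restrict S).continuousAt
  -- continuity of f at x
  obtain ⟨δ', hδ', hfδ⟩ := Metric.continuousAt_iff.mp (f.continuous.continuousAt (x := x)) (ε / 4)
    (by linarith)
  obtain ⟨N, hN⟩ := exists_nat_one_div_lt (ε := δ') hδ'
  have hfreq := (mapClusterPt_iff_frequently.mp hres) (Metric.ball (f.restrict S) (ε / 4))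
    (Metric.ball_mem_nhds _ (by linarith))
  obtain ⟨j, hjball, hjge⟩ := (hfreq.and_eventually (eventually_ge_atTop N)).exists
  -- bounds
  have hxS : x ∈ S := mem_insert _ _
  have hYjS : Y j ∈ S := mem_insert_iff.mpr (Or.inr ⟨j, rfl⟩)
  have hb1 : dist ((F j) (Y j)) (f (Y j)) ≤ ε / 4 := by
    have := ContinuousMap.dist_apply_le_dist (f := (F j).restrict S) (g := f.restrict S)
      ⟨Y j, hYjS⟩
    simpa using this.trans (le_of_lt (by simpa [Metric.mem_ball] using hjball))
  have hb3 : dist (f x) ((F j) x) ≤ ε / 4 := by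
    have := ContinuousMap.dist_apply_le_dist (f := (F j).restrict S) (g := f.restrict S)
      ⟨x, hxS⟩
    have h' : dist ((F j) x) (f x) ≤ ε / 4 :=
      by simpa using this.trans (le_of_lt (by simpa [Metric.mem_ball] using hjball))
    rwa [dist_comm] at h'
  have hb2 : dist (f (Y j)) (f x) < ε / 4 := by
    apply hfδ
    calc dist (Y j) x < 1 / ((j : ℝ) + 1) := hY j
      _ ≤ 1 / ((N : ℝ) + 1) := by
          apply one_div_le_one_div_of_le (by positivity)
          have : (N : ℝ) ≤ j := Nat.cast_le.mpr hjge
          linarith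
      _ < δ' := hN
  have := hY2 j
  have htri : dist ((F j) (Y j)) ((F j) x) ≤
      dist ((F j) (Y j)) (f (Y j)) + dist (f (Y j)) (f x) + dist (f x) ((F j) x) :=
    dist_triangle4 _ _ _ _
  linarith

lemma Kfam_swallow {C : Set C(ℚ, ℝ)} (hC : IsCompact C) : ∃ α : ℕ → ℕ, C ⊆ Kfam α := by
  -- pointwise bounds
  have hbdd : ∀ n : ℕ, ∃ M : ℕ, ∀ f ∈ C, |f (qe n)| ≤ (M : ℝ) := by
    intro n
    have himg : IsCompact ((fun f : C(ℚ, ℝ) => f (qe n)) '' C) :=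
      hC.image (continuous_eval_const (qe n))
    obtain ⟨r, hr⟩ := himg.isBounded.subset_closedBall 0
    obtain ⟨M, hM⟩ := exists_nat_ge r
    refine ⟨M, fun f hf => ?_⟩
    have := hr ⟨f, hf, rfl⟩
    rw [Metric.mem_closedBall, Real.dist_eq, sub_zero] at this
    exact this.trans hM
  choose Mb hMb using hbdd
  have hequi : ∀ n k : ℕ, ∃ m : ℕ, ∀ f ∈ C, ∀ y : ℚ,
      dist y (qe n) ≤ 1 / ((m : ℝ) + 1) → dist (f y) (f (qe n)) ≤ 1 / ((k : ℝ) + 1) := by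
    intro n k
    obtain ⟨δ, hδ, hδ'⟩ := compact_equicont hC (qe n) (ε := 1 / ((k : ℝ) + 1)) (by positivity)
    obtain ⟨m, hm⟩ := exists_nat_one_div_lt hδ
    exact ⟨m, fun f hf y hy => hδ' f hf y (lt_of_le_of_lt hy hm)⟩
  choose md hmd using hequi
  refine ⟨fun j => if j % 2 = 0 then Mb (j / 2) else md (Nat.unpair (j / 2)).1
    (Nat.unpair (j / 2)).2, fun f hf => ?_⟩
  simp only [Kfam, Set.mem_setOf_eq]
  constructor
  · intro n
    have h1 : (2 * n) % 2 = 0 := by omega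
    have h2 : (2 * n) / 2 = n := by omega
    rw [if_pos h1, h2]
    exact hMb n f hf
  · intro n k y hy
    have h1 : (2 * Nat.pair n k + 1) % 2 ≠ 0 := by omega
    have h2 : (2 * Nat.pair n k + 1) / 2 = Nat.pair n k := by omega
    rw [if_neg h1, h2, Nat.unpair_pair] at hy
    exact hmd n k f hf y hy

end StatementNine


/-- `C_k(ℚ)` has a compact resolution swallowing its compact sets. -/
theorem statement9 : CompactResolutionSwallowing C(ℚ, ℝ) := by
  refine ⟨Kfam, ⟨Kfam_isCompact, ?_, fun α β h => Kfam_mono h⟩, fun C hC => Kfam_swallow hC⟩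
  rw [Set.eq_univ_iff_forall]
  intro f
  obtain ⟨α, hα⟩ := Kfam_swallow (isCompact_singleton (x := f))
  exact Set.mem_iUnion.mpr ⟨α, hα rfl⟩
end

section
/- Let X be a σ-compact Ascoli space. Then C_k(X) has a compact resolution swallowing the compact sets of C_k(X) if and only if X admits an Ascoli uniformity 𝒰 with a G-base. -/
open Set Filter Topology Uniformity

/-- Entourage candidates built from a compact resolution of `C(X, ℝ)`. -/
def entSet {X : Type*} [TopologicalSpace X] (K : (ℕ → ℕ) → Set C(X, ℝ)) (α : ℕ → ℕ) :
    Set (X × X) :=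
  {p | ∀ f ∈ K (α ∘ Nat.succ), |f p.1 - f p.2| ≤ 1 / (α 0 + 1)}

lemma entSet_anti {X : Type*} [TopologicalSpace X] {K : (ℕ → ℕ) → Set C(X, ℝ)}
    (hK : ∀ α β : ℕ → ℕ, α ≤ β → K α ⊆ K β) {α β : ℕ → ℕ} (h : α ≤ β) :
    entSet K β ⊆ entSet K α := by
  intro p hp f hf
  have h1 : ((α 0 : ℝ) + 1)⁻¹ ≥ ((β 0 : ℝ) + 1)⁻¹ := by
    exact inv_anti₀ (by positivity) (by exact_mod_cast Nat.add_le_add_right (h 0) 1)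
  have := hp f (hK _ _ (fun n => h (n + 1)) hf)
  rw [one_div] at this ⊢
  linarith

lemma entSet_mem_aux {X : Type*} [TopologicalSpace X] {K : (ℕ → ℕ) → Set C(X, ℝ)}
    {α : ℕ → ℕ} {p : X × X} (h : p ∈ entSet K α) {f : C(X, ℝ)} (hf : f ∈ K (α ∘ Nat.succ)) :
    |f p.1 - f p.2| ≤ 1 / (α 0 + 1) := h f hf

section Forward

variable {X : Type*} [TopologicalSpace X] {K : (ℕ → ℕ) → Set C(X, ℝ)}

/-- The filter generated by the entourage candidates. -/
def entFilter (K : (ℕ → ℕ) → Set C(X, ℝ)) : Filter (X × X) :=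
  ⨅ α : ℕ → ℕ, 𝓟 (entSet K α)

lemma entFilter_hasBasis (hK : ∀ α β : ℕ → ℕ, α ≤ β → K α ⊆ K β) :
    (entFilter K).HasBasis (fun _ => True) (entSet K) := by
  apply Filter.hasBasis_iInf_principal
  intro α β
  refine ⟨fun n => max (α n) (β n), ?_, ?_⟩
  · exact entSet_anti hK (fun n => le_max_left _ _)
  · exact entSet_anti hK (fun n => le_max_right _ _)

lemma entSet_mem_entFilter (α : ℕ → ℕ) : entSet K α ∈ entFilter K :=
  mem_iInf_of_mem α (mem_principal_self _)

/-- The uniform space core built from a compact resolution. -/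
def entCore (hK : ∀ α β : ℕ → ℕ, α ≤ β → K α ⊆ K β) : UniformSpace.Core X where
  uniformity := entFilter K
  refl := by
    refine le_iInf fun α => principal_mono.mpr ?_
    rintro ⟨x, y⟩ h
    have hxy : x = y := h
    subst hxy
    intro f _
    simp only [sub_self, abs_zero]
    positivity
  symm := by
    rw [(entFilter_hasBasis hK).tendsto_iff (entFilter_hasBasis hK)]
    rintro α -
    refine ⟨α, trivial, ?_⟩
    rintro ⟨x, y⟩ h f hf
    rw [abs_sub_comm]
    exact h f hf
  comp := by
    refine le_iInf fun α => ?_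
    set α' : ℕ → ℕ := fun n => Nat.casesOn n (2 * α 0 + 1) (fun m => α (m + 1)) with hα'
    have hsucc : α' ∘ Nat.succ = α ∘ Nat.succ := rfl
    have hcomp : SetRel.comp (entSet K α') (entSet K α') ⊆ entSet K α := by
      rintro ⟨x, y⟩ ⟨z, hxz, hzy⟩ f hf
      have h1 := hxz f (by rwa [hsucc])
      have h2 := hzy f (by rwa [hsucc])
      have harith : (1 : ℝ) / (α' 0 + 1) + 1 / (α' 0 + 1) = 1 / (α 0 + 1) := by
        have : ((α' 0 : ℝ) + 1) = 2 * ((α 0 : ℝ) + 1) := by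
          show ((2 * α 0 + 1 : ℕ) : ℝ) + 1 = _
          push_cast; ring
        rw [this]
        have hpos : (0 : ℝ) < (α 0 : ℝ) + 1 := by positivity
        rw [← add_div]
        rw [div_eq_div_iff (by positivity) (by positivity)]
        ring
      calc |f x - f y| ≤ |f x - f z| + |f z - f y| := abs_sub_le _ _ _
        _ ≤ 1 / (α' 0 + 1) + 1 / (α' 0 + 1) := add_le_add h1 h2
        _ = 1 / (α 0 + 1) := harith
    calc (entFilter K).lift' (fun s => SetRel.comp s s)
        ≤ (𝓟 (entSet K α')).lift' (fun s => SetRel.comp s s) :=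
          Filter.lift'_mono (iInf_le _ α') le_rfl
      _ = 𝓟 (SetRel.comp (entSet K α') (entSet K α')) :=
          Filter.lift'_principal (fun s t h => SetRel.comp_subset_comp h h)
      _ ≤ 𝓟 (entSet K α) := principal_mono.mpr hcomp

end Forward

section Forward2

variable {X : Type*} [TopologicalSpace X] {K : (ℕ → ℕ) → Set C(X, ℝ)}

lemma entSet_ball_mem_nhds (hX : AscoliSpace X) (hKc : ∀ α, IsCompact (K α))
    (x : X) (α : ℕ → ℕ) : Prod.mk x ⁻¹' entSet K α ∈ 𝓝 x := by
  set β := α ∘ Nat.succ with hβ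
  have hc : IsCompact (K β) := hKc β
  haveI : CompactSpace (K β) := isCompact_iff_compactSpace.mp hc
  have hev : Continuous fun p : K β × X => (p.1 : C(X, ℝ)) p.2 := hX (K β) hc
  have hg : Continuous fun p : K β × X => |(p.1 : C(X, ℝ)) p.2 - (p.1 : C(X, ℝ)) x| := by
    apply Continuous.abs
    exact hev.sub (hev.comp (continuous_fst.prodMk continuous_const))
  have hεpos : (0 : ℝ) < 1 / (α 0 + 1) := by positivity
  have hopen : IsOpen ((fun p : K β × X => |(p.1 : C(X, ℝ)) p.2 - (p.1 : C(X, ℝ)) x|) ⁻¹'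
      Iio (1 / (α 0 + 1))) := isOpen_Iio.preimage hg
  have hsub : (univ : Set (K β)) ×ˢ ({x} : Set X) ⊆ _ :=
    fun p hp => by
      rcases hp with ⟨-, hp2⟩
      have : p.2 = x := hp2
      show p ∈ (fun p : K β × X => |(p.1 : C(X, ℝ)) p.2 - (p.1 : C(X, ℝ)) x|) ⁻¹'
        Iio (1 / (α 0 + 1))
      simp only [mem_preimage, this, sub_self, abs_zero, mem_Iio]
      exact hεpos
  obtain ⟨u, v, -, hvo, hsu, hxv, huv⟩ :=
    generalized_tube_lemma isCompact_univ isCompact_singleton hopen hsub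
  refine mem_of_superset (hvo.mem_nhds (hxv rfl)) ?_
  intro y hy
  intro f hf
  have h2 := huv (⟨hsu (mem_univ (⟨f, hf⟩ : K β)), hy⟩ :
    ((⟨f, hf⟩ : K β), y) ∈ u ×ˢ v)
  rw [mem_preimage, mem_Iio] at h2
  rw [abs_sub_comm] at h2
  exact h2.le

end Forward2

section Forward3

variable {X : Type*} [TopologicalSpace X]

lemma forward_dir [T35Space X] (hX : AscoliSpace X)
    (h : CompactResolutionSwallowing C(X, ℝ)) :
    ∃ u : UniformSpace X, IsAscoliUniformity X u ∧ UniformityHasGBase X u := by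
  obtain ⟨K, ⟨hKc, hKcov, hKmono⟩, hKsw⟩ := h
  set u0 : UniformSpace X := UniformSpace.ofCore (entCore (K := K) hKmono) with hu0
  have hB := entFilter_hasBasis (K := K) hKmono
  have hcomap : ∀ x : X, 𝓝 x = Filter.comap (Prod.mk x) (entFilter K) := by
    intro x
    apply le_antisymm
    · exact ((hB.comap (Prod.mk x)).ge_iff).mpr
        fun α _ => entSet_ball_mem_nhds hX hKc x α
    · rw [Filter.le_def]
      intro V hV
      obtain ⟨W, hWV, hWo, hxW⟩ := mem_nhds_iff.mp hV
      obtain ⟨f, hfc, hfx, hf1⟩ :=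
        CompletelyRegularSpace.completely_regular x Wᶜ hWo.isClosed_compl (by simp [hxW])
      set g : C(X, ℝ) := ⟨fun y => (f y : ℝ), continuous_subtype_val.comp hfc⟩ with hg
      have hgmem : g ∈ ⋃ α, K α := by rw [hKcov]; exact mem_univ _
      obtain ⟨α₀, hα₀⟩ := mem_iUnion.mp hgmem
      set α : ℕ → ℕ := fun n => Nat.casesOn n 1 α₀ with hα
      rw [(hB.comap (Prod.mk x)).mem_iff]
      refine ⟨α, trivial, ?_⟩
      intro y hy
      have hsucc : α ∘ Nat.succ = α₀ := rfl
      have h1 : |g x - g y| ≤ 1 / ((1 : ℕ) + 1 : ℝ) := hy g (by rw [hsucc]; exact hα₀)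
      have hgx : g x = 0 := by
        show ((f x : ℝ)) = 0
        rw [hfx]; rfl
      have hgy : |g y| ≤ 1 / 2 := by
        rw [hgx, zero_sub, abs_neg] at h1
        convert h1 using 2
        norm_num
      apply hWV
      by_contra hyW
      have : g y = 1 := by
        show ((f y : ℝ)) = 1
        rw [hf1 (by simpa using hyW)]; rfl
      rw [this] at hgy
      norm_num at hgy
  have htop : (‹TopologicalSpace X› : TopologicalSpace X) = u0.toTopologicalSpace := by
    refine TopologicalSpace.ext_nhds fun x => ?_
    rw [u0.nhds_eq_comap_uniformity x] at *
    exact hcomap x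
  refine ⟨u0.replaceTopology htop, ⟨rfl, ?_⟩, ?_⟩
  · intro C hC ε hε
    obtain ⟨α₀, hα₀⟩ := hKsw C hC
    obtain ⟨N, hN⟩ := exists_nat_one_div_lt hε
    set α : ℕ → ℕ := fun n => Nat.casesOn n N α₀ with hα
    refine ⟨entSet K α, entSet_mem_entFilter α, ?_⟩
    intro f hf p hp
    have hsucc : α ∘ Nat.succ = α₀ := rfl
    have := hp f (by rw [hsucc]; exact hα₀ hf)
    calc |f p.1 - f p.2| ≤ 1 / (α 0 + 1) := this
      _ < ε := hN
  · refine ⟨entSet K, fun α => entSet_mem_entFilter α, fun α β h => entSet_anti hKmono h, ?_⟩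
    intro V hV
    obtain ⟨α, -, hα⟩ := hB.mem_iff.mp hV
    exact ⟨α, hα⟩

end Forward3

section Reverse

/-- Combine a sequence of bounds and a sequence of `ℕ^ℕ`-indices into one index. -/
def mkAlpha (M : ℕ → ℕ) (γ : ℕ → ℕ → ℕ) : ℕ → ℕ :=
  fun k => Nat.casesOn (Nat.unpair k).1 (M (Nat.unpair k).2) (fun n => γ n (Nat.unpair k).2)

lemma mkAlpha_pair_zero (M : ℕ → ℕ) (γ : ℕ → ℕ → ℕ) (m : ℕ) :
    mkAlpha M γ (Nat.pair 0 m) = M m := by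
  simp [mkAlpha, Nat.unpair_pair]

lemma mkAlpha_pair_succ (M : ℕ → ℕ) (γ : ℕ → ℕ → ℕ) (n : ℕ) :
    (fun m => mkAlpha M γ (Nat.pair (n + 1) m)) = γ n := by
  funext m
  simp [mkAlpha, Nat.unpair_pair]

variable {X : Type*} [TopologicalSpace X]

/-- The sets of the compact resolution of `C_k(X)` built from a uniformity with a G-base. -/
def resSet [SigmaCompactSpace X] (U : (ℕ → ℕ) → Set (X × X)) (α : ℕ → ℕ) : Set C(X, ℝ) :=
  {f | ∀ n : ℕ, (∀ x ∈ compactCovering X n, |f x| ≤ (α (Nat.pair 0 n) : ℝ)) ∧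
    ∀ p ∈ U (fun m => α (Nat.pair (n + 1) m)), |f p.1 - f p.2| ≤ 1 / (n + 1)}

/-- The corresponding set of bare functions. -/
def resSet' [SigmaCompactSpace X] (U : (ℕ → ℕ) → Set (X × X)) (α : ℕ → ℕ) : Set (X → ℝ) :=
  {g | ∀ n : ℕ, (∀ x ∈ compactCovering X n, |g x| ≤ (α (Nat.pair 0 n) : ℝ)) ∧
    ∀ p ∈ U (fun m => α (Nat.pair (n + 1) m)), |g p.1 - g p.2| ≤ 1 / (n + 1)}

lemma reverse_dir [SigmaCompactSpace X] (hX : AscoliSpace X)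
    (u : UniformSpace X) (hu : IsAscoliUniformity X u) (hg : UniformityHasGBase X u) :
    CompactResolutionSwallowing C(X, ℝ) := by
  obtain ⟨hu_top, hu_eq⟩ := hu
  obtain ⟨U, hUmem, hUanti, hUbase⟩ := hg
  -- neighborhoods from entourages
  have hnhds : ∀ x : X, 𝓝 x = Filter.comap (Prod.mk x) 𝓤[u] := by
    intro x
    rw [← hu_top]
    exact u.nhds_eq_comap_uniformity x
  -- the key equicontinuity property of `resSet' U α`
  have key : ∀ (α : ℕ → ℕ) (x : X) (ε : ℝ), 0 < ε →
      ∃ W ∈ 𝓝 x, ∀ g ∈ resSet' U α, ∀ y ∈ W, |g x - g y| < ε := by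
    intro α x ε hε
    obtain ⟨N, hN⟩ := exists_nat_one_div_lt hε
    refine ⟨Prod.mk x ⁻¹' U (fun m => α (Nat.pair (N + 1) m)), ?_, ?_⟩
    · rw [hnhds x]
      exact Filter.preimage_mem_comap (hUmem _)
    · intro g hgm y hy
      have := (hgm N).2 (x, y) hy
      calc |g x - g y| ≤ 1 / (N + 1) := this
        _ < ε := hN
  -- `resSet' U α` is compact in the product topology
  have hcomp' : ∀ α : ℕ → ℕ, IsCompact (resSet' U α) := by
    intro α
    have hclosed : IsClosed (resSet' U α) := by
      have : resSet' U α = ⋂ n : ℕ,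
          ({g : X → ℝ | ∀ x ∈ compactCovering X n, |g x| ≤ (α (Nat.pair 0 n) : ℝ)} ∩
           {g : X → ℝ | ∀ p ∈ U (fun m => α (Nat.pair (n + 1) m)),
              |g p.1 - g p.2| ≤ 1 / (n + 1)}) := by
        ext g
        simp only [resSet', Set.mem_setOf_eq, Set.mem_iInter, Set.mem_inter_iff]
      rw [this]
      refine isClosed_iInter fun n => IsClosed.inter ?_ ?_
      · have : {g : X → ℝ | ∀ x ∈ compactCovering X n, |g x| ≤ (α (Nat.pair 0 n) : ℝ)} =
            ⋂ x ∈ compactCovering X n, {g : X → ℝ | |g x| ≤ (α (Nat.pair 0 n) : ℝ)} := by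
          ext g; simp
        rw [this]
        exact isClosed_biInter fun x _ =>
          isClosed_le ((continuous_apply x).abs) continuous_const
      · have : {g : X → ℝ | ∀ p ∈ U (fun m => α (Nat.pair (n + 1) m)),
            |g p.1 - g p.2| ≤ 1 / (n + 1)} =
            ⋂ p ∈ U (fun m => α (Nat.pair (n + 1) m)),
              {g : X → ℝ | |g p.1 - g p.2| ≤ 1 / (n + 1)} := by
          ext g; simp
        rw [this]
        exact isClosed_biInter fun p _ =>
          isClosed_le (((continuous_apply p.1).sub (continuous_apply p.2)).abs)
            continuous_const
    have hchoice : ∀ x : X, ∃ n, x ∈ compactCovering X n := exists_mem_compactCovering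
    choose nx hnx using hchoice
    have hsub : resSet' U α ⊆
        Set.pi univ (fun x => Icc (-(α (Nat.pair 0 (nx x)) : ℝ)) (α (Nat.pair 0 (nx x)))) := by
      intro g hgm x _
      have := (hgm (nx x)).1 x (hnx x)
      rw [abs_le] at this
      exact this
    exact IsCompact.of_isClosed_subset (isCompact_univ_pi fun x => isCompact_Icc) hclosed hsub
  -- the image identification
  have himg : ∀ α : ℕ → ℕ, ContinuousMap.toFun '' (resSet U α) = resSet' U α := by
    intro α
    apply Set.Subset.antisymm
    · rintro g ⟨f, hf, rfl⟩
      exact hf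
    · intro g hgm
      have hgc : Continuous g := by
        rw [continuous_iff_continuousAt]
        intro x
        rw [ContinuousAt, Metric.tendsto_nhds]
        intro ε hε
        obtain ⟨W, hW, hWp⟩ := key α x ε hε
        filter_upwards [hW] with y hy
        rw [Real.dist_eq, abs_sub_comm]
        exact hWp g hgm y hy
      exact ⟨⟨g, hgc⟩, hgm, rfl⟩
  -- compactness of `resSet U α`
  have hcomp : ∀ α : ℕ → ℕ, IsCompact (resSet U α) := by
    intro α
    apply ArzelaAscoli.isCompact_of_equicontinuous
    · rw [himg α]
      exact hcomp' α
    · intro x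
      rw [Metric.equicontinuousAt_iff_right]
      intro ε hε
      obtain ⟨W, hW, hWp⟩ := key α x ε hε
      filter_upwards [hW] with y hy f
      rw [Real.dist_eq]
      exact hWp (f : C(X, ℝ)) f.2 y hy
  -- swallowing
  have hswallow : ∀ C : Set C(X, ℝ), IsCompact C → ∃ α, C ⊆ resSet U α := by
    intro C hC
    have h1 : ∀ n : ℕ, ∃ M : ℕ, ∀ f ∈ C, ∀ x ∈ compactCovering X n, |f x| ≤ (M : ℝ) := by
      intro n
      haveI : CompactSpace C := isCompact_iff_compactSpace.mp hC
      have hev : Continuous fun p : C × X => (p.1 : C(X, ℝ)) p.2 := hX C hC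
      have habs : Continuous fun p : C × X => |(p.1 : C(X, ℝ)) p.2| := hev.abs
      have hcpt : IsCompact ((fun p : C × X => |(p.1 : C(X, ℝ)) p.2|) ''
          ((univ : Set C) ×ˢ compactCovering X n)) :=
        (isCompact_univ.prod (isCompact_compactCovering X n)).image habs
      obtain ⟨M, hM⟩ := hcpt.bddAbove
      refine ⟨⌈M⌉₊, fun f hf x hx => ?_⟩
      have h3 : |f x| ≤ M :=
        hM ⟨((⟨f, hf⟩ : C), x), ⟨mem_univ _, hx⟩, rfl⟩
      exact h3.trans (Nat.le_ceil M)
    have h2 : ∀ n : ℕ, ∃ γ : ℕ → ℕ, ∀ f ∈ C, ∀ p ∈ U γ, |f p.1 - f p.2| ≤ 1 / (n + 1 : ℝ) := by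
      intro n
      obtain ⟨V, hVmem, hV⟩ := hu_eq C hC (1 / (n + 1)) (by positivity)
      obtain ⟨γ, hγ⟩ := hUbase V hVmem
      exact ⟨γ, fun f hf p hp => (hV f hf p (hγ hp)).le⟩
    choose M hM using h1
    choose γ hγ using h2
    refine ⟨mkAlpha M γ, ?_⟩
    intro f hf n
    constructor
    · intro x hx
      rw [mkAlpha_pair_zero]
      exact hM n f hf x hx
    · intro p hp
      rw [mkAlpha_pair_succ] at hp
      exact hγ n f hf p hp
  -- assembling
  refine ⟨resSet U, ⟨hcomp, ?_, ?_⟩, hswallow⟩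
  · rw [Set.eq_univ_iff_forall]
    intro f
    obtain ⟨α, hα⟩ := hswallow {f} isCompact_singleton
    exact Set.mem_iUnion.mpr ⟨α, hα rfl⟩
  · intro α β hab f hf n
    refine ⟨?_, ?_⟩
    · intro x hx
      refine le_trans ((hf n).1 x hx) ?_
      exact_mod_cast hab (Nat.pair 0 n)
    · intro p hp
      exact (hf n).2 p (hUanti _ _ (fun m => hab (Nat.pair (n + 1) m)) hp)

end Reverse

/-- For a σ-compact Ascoli space `X`, `C_k(X)` has a compact
resolution swallowing the compact sets of `C_k(X)` iff `X` admits an Ascoli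
uniformity with a G-base. -/
theorem statement13 (X : Type*) [TopologicalSpace X] [T35Space X] [SigmaCompactSpace X]
    (hX : AscoliSpace X) :
    CompactResolutionSwallowing C(X, ℝ) ↔
      ∃ u : UniformSpace X, IsAscoliUniformity X u ∧ UniformityHasGBase X u := by
  constructor
  · exact fun h => forward_dir hX h
  · rintro ⟨u, hu, hg⟩
    exact reverse_dir hX u hu hg
end

section
/- Let X be a countable Ascoli space. Then C_k(X) has a compact resolution swallowing the compact sets of C_k(X) if and only if X has a G-base. -/
open Set Filter Topology Uniformity

section Aux

variable {X : Type*} [TopologicalSpace X]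

/-- From the Ascoli property, every compact subset of `C_k(X)` is equicontinuous
at every point. -/
lemma ascoli_equicont (hX : AscoliSpace X) {K : Set C(X, ℝ)} (hK : IsCompact K)
    (x : X) {ε : ℝ} (hε : 0 < ε) :
    ∃ V ∈ 𝓝 x, ∀ f ∈ K, ∀ y ∈ V, |f y - f x| < ε := by
  have hcont : Continuous fun p : K × X => (p.1 : C(X, ℝ)) p.2 := hX K hK
  have hcont2 : Continuous fun p : K × X =>
      |(p.1 : C(X, ℝ)) p.2 - (p.1 : C(X, ℝ)) x| := by
    refine (hcont.sub ?_).abs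
    exact (continuous_eval_const x).comp
      (continuous_subtype_val.comp continuous_fst)
  have hopen : IsOpen {p : K × X | |(p.1 : C(X, ℝ)) p.2 - (p.1 : C(X, ℝ)) x| < ε} :=
    isOpen_Iio.preimage hcont2
  haveI : CompactSpace K := isCompact_iff_compactSpace.mp hK
  have hsub : (univ : Set K) ×ˢ ({x} : Set X) ⊆
      {p : K × X | |(p.1 : C(X, ℝ)) p.2 - (p.1 : C(X, ℝ)) x| < ε} := by
    rintro ⟨f, y⟩ ⟨-, hy⟩
    simp only [mem_singleton_iff] at hy
    simp [hy, hε]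
  obtain ⟨u, v, _, hv, hsu, hxv, huv⟩ :=
    generalized_tube_lemma isCompact_univ isCompact_singleton hopen hsub
  exact ⟨v, hv.mem_nhds (hxv rfl), fun f hf y hy =>
    huv (show ((⟨f, hf⟩ : K), y) ∈ u ×ˢ v from ⟨hsu (mem_univ _), hy⟩)⟩

/-- Encoding of a pair consisting of a sequence of naturals and a doubly-indexed
family of elements of `ℕ^ℕ` into a single element of `ℕ^ℕ`. -/
def mkIdx (b : ℕ → ℕ) (c : ℕ → ℕ → ℕ → ℕ) : ℕ → ℕ := fun k =>
  if (Nat.unpair k).1 = 0 then b (Nat.unpair k).2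
  else c (Nat.unpair (Nat.unpair (Nat.unpair k).2).1).1
         (Nat.unpair (Nat.unpair (Nat.unpair k).2).1).2
         (Nat.unpair (Nat.unpair k).2).2

lemma mkIdx_pair0 (b : ℕ → ℕ) (c : ℕ → ℕ → ℕ → ℕ) (n : ℕ) :
    mkIdx b c (Nat.pair 0 n) = b n := by simp [mkIdx]

lemma mkIdx_pair1 (b : ℕ → ℕ) (c : ℕ → ℕ → ℕ → ℕ) (n m k : ℕ) :
    mkIdx b c (Nat.pair 1 (Nat.pair (Nat.pair n m) k)) = c n m k := by simp [mkIdx]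

theorem swallow_to_gbase [T35Space X]
    (hX : AscoliSpace X) (h : CompactResolutionSwallowing C(X, ℝ)) : HasGBase X := by
  obtain ⟨K, ⟨hcomp, hcover, hmono⟩, -⟩ := h
  intro x
  refine ⟨fun α => {y | ∀ f ∈ K α, |f y - f x| < 1}, ?_, ?_, ?_⟩
  · intro α
    obtain ⟨V, hV, hVp⟩ := ascoli_equicont hX (hcomp α) x one_pos
    exact mem_of_superset hV fun y hy f hf => hVp f hf y hy
  · intro α β hαβ y hy f hf
    exact hy f (hmono α β hαβ hf)
  · intro V hV
    have hxint : x ∈ interior V := mem_interior_iff_mem_nhds.mpr hV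
    obtain ⟨f, hfc, hfx, hf1⟩ := CompletelyRegularSpace.completely_regular x
      (interior V)ᶜ isOpen_interior.isClosed_compl (fun h => h hxint)
    set g : C(X, ℝ) := ⟨fun y => 2 * (f y : ℝ),
      continuous_const.mul (continuous_subtype_val.comp hfc)⟩ with hg
    have hgmem : g ∈ ⋃ α, K α := hcover ▸ mem_univ g
    obtain ⟨α, hgα⟩ := mem_iUnion.mp hgmem
    refine ⟨α, fun y hy => ?_⟩
    have h1 : |g y - g x| < 1 := hy g hgα
    have hgx : g x = 0 := by simp [hg, hfx]
    rw [hgx, sub_zero] at h1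
    have hyint : y ∈ interior V := by
      by_contra hyc
      have : g y = 2 := by
        have : f y = 1 := hf1 hyc
        simp [hg, this]
      rw [this] at h1
      norm_num at h1
    exact interior_subset hyint

theorem gbase_to_swallow [Countable X]
    (hX : AscoliSpace X) (hG : HasGBase X) : CompactResolutionSwallowing C(X, ℝ) := by
  rcases isEmpty_or_nonempty X with hE | hNE
  · haveI : Subsingleton C(X, ℝ) := ⟨fun f g => ContinuousMap.ext fun x => isEmptyElim x⟩
    exact ⟨fun _ => univ,
      ⟨fun _ => Set.finite_univ.isCompact, Set.iUnion_const _, fun _ _ _ => subset_rfl⟩,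
      fun C _ => ⟨fun _ => 0, subset_univ _⟩⟩
  obtain ⟨e, he⟩ := exists_surjective_nat X
  choose U hU1 hU2 hU3 using hG
  set T : (ℕ → ℕ) → Set (X → ℝ) := fun α =>
    {g | (∀ n : ℕ, |g (e n)| ≤ (α (Nat.pair 0 n) : ℝ)) ∧
         ∀ n m : ℕ, ∀ y ∈ U (e n) (fun k => α (Nat.pair 1 (Nat.pair (Nat.pair n m) k))),
           |g y - g (e n)| ≤ 1 / ((m : ℝ) + 1)} with hTdef
  set K : (ℕ → ℕ) → Set C(X, ℝ) := fun α => {f | ⇑f ∈ T α} with hKdef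
  -- continuity of members of `T α`
  have hTcont : ∀ α : ℕ → ℕ, ∀ g ∈ T α, Continuous g := by
    intro α g hg
    rw [continuous_iff_continuousAt]
    intro x
    obtain ⟨n, rfl⟩ := he x
    rw [ContinuousAt, Metric.tendsto_nhds]
    intro ε hε
    obtain ⟨m, hm⟩ := exists_nat_one_div_lt hε
    filter_upwards [hU1 (e n) (fun k => α (Nat.pair 1 (Nat.pair (Nat.pair n m) k)))] with y hy
    calc dist (g y) (g (e n)) = |g y - g (e n)| := Real.dist_eq _ _
      _ ≤ 1 / ((m : ℝ) + 1) := hg.2 n m y hy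
      _ < ε := hm
  -- compactness of `T α` in the product topology
  have hTcompact : ∀ α : ℕ → ℕ, IsCompact (T α) := by
    intro α
    have hCc : IsCompact (Set.pi univ fun y : X =>
        Icc (-(α (Nat.pair 0 (Function.surjInv he y)) : ℝ))
          (α (Nat.pair 0 (Function.surjInv he y)) : ℝ)) :=
      isCompact_univ_pi fun _ => isCompact_Icc
    have hsub : T α ⊆ Set.pi univ fun y : X =>
        Icc (-(α (Nat.pair 0 (Function.surjInv he y)) : ℝ))
          (α (Nat.pair 0 (Function.surjInv he y)) : ℝ) := by
      intro g hg
      rw [Set.mem_univ_pi]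
      intro y
      have := hg.1 (Function.surjInv he y)
      rw [Function.surjInv_eq he y] at this
      exact abs_le.mp this
    have hclosed : IsClosed (T α) := by
      have h1 : IsClosed {g : X → ℝ | ∀ n : ℕ, |g (e n)| ≤ (α (Nat.pair 0 n) : ℝ)} := by
        rw [Set.setOf_forall]
        exact isClosed_iInter fun n =>
          isClosed_le (continuous_apply (e n)).abs continuous_const
      have h2 : IsClosed {g : X → ℝ | ∀ n m : ℕ,
          ∀ y ∈ U (e n) (fun k => α (Nat.pair 1 (Nat.pair (Nat.pair n m) k))),
            |g y - g (e n)| ≤ 1 / ((m : ℝ) + 1)} := by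
        rw [Set.setOf_forall]
        refine isClosed_iInter fun n => ?_
        rw [Set.setOf_forall]
        refine isClosed_iInter fun m => ?_
        rw [Set.setOf_forall]
        refine isClosed_iInter fun y => ?_
        rw [Set.setOf_forall]
        refine isClosed_iInter fun hy => ?_
        exact isClosed_le ((continuous_apply y).sub (continuous_apply (e n))).abs
          continuous_const
      exact h1.inter h2
    exact hCc.of_isClosed_subset hclosed hsub
  -- the image of `K α` in the pointwise topology is `T α`
  have hKim : ∀ α : ℕ → ℕ, ContinuousMap.toFun '' (K α) = T α := by
    intro α
    ext g
    constructor
    · rintro ⟨f, hf, rfl⟩; exact hf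
    · intro hg; exact ⟨⟨g, hTcont α g hg⟩, hg, rfl⟩
  -- `K α` is compact in the compact-open topology by Arzelà–Ascoli
  have hKcomp : ∀ α : ℕ → ℕ, IsCompact (K α) := by
    intro α
    refine ArzelaAscoli.isCompact_of_equicontinuous _ (by rw [hKim]; exact hTcompact α) ?_
    intro x
    rw [Metric.equicontinuousAt_iff_right]
    intro ε hε
    obtain ⟨n, rfl⟩ := he x
    obtain ⟨m, hm⟩ := exists_nat_one_div_lt hε
    filter_upwards [hU1 (e n) (fun k => α (Nat.pair 1 (Nat.pair (Nat.pair n m) k)))] with y hy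
    intro f
    calc dist ((f : C(X, ℝ)) (e n)) ((f : C(X, ℝ)) y)
        = |(f : C(X, ℝ)) y - (f : C(X, ℝ)) (e n)| := by
          rw [Real.dist_eq, abs_sub_comm]
      _ ≤ 1 / ((m : ℝ) + 1) := f.2.2 n m y hy
      _ < ε := hm
  -- monotonicity
  have hTmono : ∀ α β : ℕ → ℕ, α ≤ β → T α ⊆ T β := by
    intro α β hαβ g hg
    refine ⟨fun n => le_trans (hg.1 n) (Nat.cast_le.mpr (hαβ _)), fun n m y hy => ?_⟩
    refine hg.2 n m y ?_
    exact hU2 (e n) _ _ (fun k => hαβ _) hy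
  refine ⟨K, ⟨hKcomp, ?_, fun α β hαβ f hf => hTmono α β hαβ hf⟩, ?_⟩
  -- covering
  · rw [eq_univ_iff_forall]
    intro f
    have hnm : ∀ n m : ℕ, {y : X | |f y - f (e n)| ≤ 1 / ((m : ℝ) + 1)} ∈ 𝓝 (e n) := by
      intro n m
      have hpos : (0 : ℝ) < 1 / ((m : ℝ) + 1) := by positivity
      have := f.continuous.continuousAt (x := e n)
        (Metric.closedBall_mem_nhds (f (e n)) hpos)
      refine mem_of_superset this ?_
      intro y hy
      simpa [Metric.mem_closedBall, Real.dist_eq] using hy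
    choose β hβ using fun n m => hU3 (e n) _ (hnm n m)
    refine mem_iUnion.mpr ⟨mkIdx (fun n => ⌈|f (e n)|⌉₊) (fun n m k => β n m k), ?_, ?_⟩
    · intro n
      rw [mkIdx_pair0]
      exact Nat.le_ceil _
    · intro n m y hy
      have hfun : (fun k => mkIdx (fun n => ⌈|f (e n)|⌉₊) (fun n m k => β n m k)
          (Nat.pair 1 (Nat.pair (Nat.pair n m) k))) = β n m := by
        funext k; rw [mkIdx_pair1]
      rw [hfun] at hy
      exact hβ n m hy
  -- swallowing
  · intro C hC
    have hbound : ∀ n : ℕ, ∃ M : ℝ, ∀ f ∈ C, |f (e n)| ≤ M := by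
      intro n
      have himg : IsCompact ((fun f : C(X, ℝ) => |f (e n)|) '' C) :=
        hC.image (continuous_eval_const (e n)).abs
      obtain ⟨M, hM⟩ := himg.bddAbove
      exact ⟨M, fun f hf => hM (mem_image_of_mem _ hf)⟩
    choose M hM using hbound
    have hequi : ∀ n m : ℕ, ∃ γ : ℕ → ℕ, ∀ f ∈ C, ∀ y ∈ U (e n) γ,
        |f y - f (e n)| ≤ 1 / ((m : ℝ) + 1) := by
      intro n m
      have hpos : (0 : ℝ) < 1 / ((m : ℝ) + 1) := by positivity
      obtain ⟨V, hV, hVp⟩ := ascoli_equicont hX hC (e n) hpos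
      obtain ⟨γ, hγ⟩ := hU3 (e n) V hV
      exact ⟨γ, fun f hf y hy => le_of_lt (hVp f hf y (hγ hy))⟩
    choose β hβ using hequi
    refine ⟨mkIdx (fun n => ⌈M n⌉₊) (fun n m k => β n m k), fun f hf => ?_⟩
    refine ⟨fun n => ?_, fun n m y hy => ?_⟩
    · rw [mkIdx_pair0]
      exact (hM n f hf).trans ((Nat.le_ceil _))
    · have hfun : (fun k => mkIdx (fun n => ⌈M n⌉₊) (fun n m k => β n m k)
          (Nat.pair 1 (Nat.pair (Nat.pair n m) k))) = β n m := by
        funext k; rw [mkIdx_pair1]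
      rw [hfun] at hy
      exact hβ n m f hf y hy

end Aux

/-- For a countable Ascoli space `X`, `C_k(X)` has a compact
resolution swallowing the compact sets of `C_k(X)` iff `X` has a G-base. -/
theorem statement14 (X : Type*) [TopologicalSpace X] [T35Space X] [Countable X]
    (hX : AscoliSpace X) :
    CompactResolutionSwallowing C(X, ℝ) ↔ HasGBase X := by
  exact ⟨swallow_to_gbase hX, gbase_to_swallow hX⟩
end

section
/- Let X be an Ascoli space such that C_k(X) has a compact resolution swallowing the compact sets of C_k(X). Then X has a G-base, i.e., every point of X has a G-base of neighborhoods. -/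
open Set Filter Topology Uniformity

theorem equi15 (X : Type*) [TopologicalSpace X] (hX : AscoliSpace X)
    (K : Set C(X, ℝ)) (hK : IsCompact K) (x : X) {ε : ℝ} (hε : 0 < ε) :
    {y | ∀ f ∈ K, |f y - f x| < ε} ∈ 𝓝 x := by
  haveI : CompactSpace K := isCompact_iff_compactSpace.mp hK
  have hev := hX K hK
  have hφ : Continuous fun p : K × X => |(p.1 : C(X, ℝ)) p.2 - (p.1 : C(X, ℝ)) x| := by
    apply Continuous.abs
    exact hev.sub (hev.comp (continuous_fst.prodMk continuous_const))
  have hopen : IsOpen {p : K × X | |(p.1 : C(X, ℝ)) p.2 - (p.1 : C(X, ℝ)) x| < ε} :=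
    isOpen_lt hφ continuous_const
  have hsub : (univ : Set K) ×ˢ ({x} : Set X) ⊆
      {p : K × X | |(p.1 : C(X, ℝ)) p.2 - (p.1 : C(X, ℝ)) x| < ε} := by
    rintro ⟨f, y⟩ ⟨-, hy⟩
    simp only [mem_singleton_iff] at hy
    simp [hy, hε]
  obtain ⟨u, v, -, hv, hu, hxv, huv⟩ :=
    generalized_tube_lemma isCompact_univ isCompact_singleton hopen hsub
  refine mem_of_superset (hv.mem_nhds (hxv rfl)) ?_
  intro y hy f hf
  exact huv (show (⟨f, hf⟩, y) ∈ u ×ˢ v from ⟨hu (mem_univ _), hy⟩)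

/-- If `X` is an Ascoli space and `C_k(X)` has a compact
resolution swallowing the compact sets of `C_k(X)`, then `X` has a G-base. -/
theorem statement15 (X : Type*) [TopologicalSpace X] [T35Space X]
    (hX : AscoliSpace X) (h : CompactResolutionSwallowing C(X, ℝ)) :
    HasGBase X := by
  obtain ⟨K, ⟨hKc, hKcov, hKmono⟩, -⟩ := h
  intro x
  refine ⟨fun α => {y | ∀ f ∈ K α, |f y - f x| < 1}, ?_, ?_, ?_⟩
  · intro α
    exact equi15 X hX _ (hKc α) x one_pos
  · intro α β hab y hy f hf
    exact hy f (hKmono α β hab hf)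
  · intro V hV
    obtain ⟨W, hWV, hWopen, hxW⟩ := mem_nhds_iff.mp hV
    obtain ⟨f, hfc, hfx, hf1⟩ := CompletelyRegularSpace.completely_regular x Wᶜ
      hWopen.isClosed_compl (by simp [hxW])
    set g : C(X, ℝ) := ⟨fun y => 2 * (f y : ℝ), by continuity⟩ with hg
    have hgmem : g ∈ ⋃ α, K α := hKcov ▸ mem_univ g
    obtain ⟨α, hα⟩ := mem_iUnion.mp hgmem
    refine ⟨α, fun y hy => ?_⟩
    have h1 := hy g hα
    have hgx : g x = 0 := by simp [hg, hfx]
    by_contra hyV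
    have hyW : y ∈ Wᶜ := fun hw => hyV (hWV hw)
    have : f y = 1 := hf1 hyW
    rw [hgx] at h1
    simp [hg, this] at h1
end

section
/- Let X be an Ascoli space, and let E' denote the space of all continuous real-linear functionals on C_k(X), equipped with the topology τ_e of uniform convergence on the equicontinuous pointwise-bounded subsets of C(X,ℝ). Then E' has a G-base of neighborhoods of 0 if and only if C_k(X) has a compact resolution swallowing the compact sets of C_k(X). -/
open Set Filter Topology Uniformity

/-- `A ⊆ C(X, ℝ)` is equicontinuous (ε-δ formulation). -/
def EquicontinuousSet (X : Type*) [TopologicalSpace X] (A : Set C(X, ℝ)) : Prop :=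
  ∀ x : X, ∀ ε : ℝ, 0 < ε → ∃ V ∈ nhds x, ∀ f ∈ A, ∀ y ∈ V, |f y - f x| < ε

/-- `A ⊆ C(X, ℝ)` is pointwise bounded. -/
def PointwiseBoundedSet (X : Type*) [TopologicalSpace X] (A : Set C(X, ℝ)) : Prop :=
  ∀ x : X, ∃ M : ℝ, ∀ f ∈ A, |f x| ≤ M

/-- The neighborhood filter of `0` for the topology `τ_e` on the dual
`E' = (C_k(X))'` of uniform convergence on equicontinuous pointwise-bounded
subsets of `C(X, ℝ)`: the filter generated by the polars of such sets.
Since `τ_e` is a vector topology and these polars form a base of neighborhoods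
of `0`, `E'` has a G-base (of neighborhoods of `0`) iff this filter has an
`ℕ^ℕ`-decreasing base. -/
def tauENhdsZero (X : Type*) [TopologicalSpace X] : Filter (C(X, ℝ) →L[ℝ] ℝ) :=
  Filter.generate {S | ∃ A : Set C(X, ℝ), EquicontinuousSet X A ∧ PointwiseBoundedSet X A ∧
    S = {μ : C(X, ℝ) →L[ℝ] ℝ | ∀ f ∈ A, |μ f| ≤ 1}}


section Aux

variable {X : Type*} [TopologicalSpace X]

/-- Dirac evaluation as a continuous linear functional on `C_k(X)`. -/
noncomputable def diracCLM (x : X) : C(X, ℝ) →L[ℝ] ℝ where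
  toFun f := f x
  map_add' _ _ := rfl
  map_smul' _ _ := rfl
  cont := continuous_eval_const x

@[simp] lemma diracCLM_apply (x : X) (f : C(X, ℝ)) : diracCLM x f = f x := rfl

lemma ptbdd_of_compact {K : Set C(X, ℝ)} (hK : IsCompact K) : PointwiseBoundedSet X K := by
  intro x
  have h := hK.image (continuous_eval_const x)
  obtain ⟨M, hM⟩ := h.isBounded.subset_closedBall 0
  exact ⟨M, fun f hf => by simpa [Real.dist_eq] using hM ⟨f, hf, rfl⟩⟩

lemma equicont_of_compact (hX : AscoliSpace X) {K : Set C(X, ℝ)} (hK : IsCompact K) :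
    EquicontinuousSet X K := by
  intro x ε hε
  have hc := hX K hK
  have key : ∀ f : K, ∃ W : Set K, ∃ V : Set X, W ∈ 𝓝 f ∧ V ∈ 𝓝 x ∧
      ∀ g ∈ W, ∀ y ∈ V, |(g : C(X, ℝ)) y - (f : C(X, ℝ)) x| < ε / 2 := by
    intro f
    have hopen : IsOpen {p : K × X | |(p.1 : C(X, ℝ)) p.2 - (f : C(X, ℝ)) x| < ε / 2} := by
      have heq : {p : K × X | |(p.1 : C(X, ℝ)) p.2 - (f : C(X, ℝ)) x| < ε / 2} =
          (fun p : K × X => (p.1 : C(X, ℝ)) p.2) ⁻¹' Metric.ball ((f : C(X, ℝ)) x) (ε / 2) := by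
        ext p; simp [Metric.mem_ball, Real.dist_eq]
      rw [heq]
      exact Metric.isOpen_ball.preimage hc
    have hmem : ((f, x) : K × X) ∈
        {p : K × X | |(p.1 : C(X, ℝ)) p.2 - (f : C(X, ℝ)) x| < ε / 2} := by
      simp [half_pos hε]
    have := hopen.mem_nhds hmem
    rw [nhds_prod_eq, Filter.mem_prod_iff] at this
    obtain ⟨W, hW, V, hV, hWV⟩ := this
    exact ⟨W, V, hW, hV, fun g hg y hy => hWV (Set.mk_mem_prod hg hy)⟩
  choose W V hW hV hWV using key
  haveI : CompactSpace K := isCompact_iff_compactSpace.mp hK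
  obtain ⟨t, -, ht⟩ := isCompact_univ.elim_nhds_subcover W (fun f _ => hW f)
  refine ⟨⋂ f ∈ t, V f, (Filter.biInter_finset_mem t).mpr (fun f _ => hV f), ?_⟩
  intro g hg y hy
  obtain ⟨f, hft, hgW⟩ := Set.mem_iUnion₂.mp (ht (Set.mem_univ (⟨g, hg⟩ : K)))
  have h1 : |g y - (f : C(X, ℝ)) x| < ε / 2 :=
    hWV f ⟨g, hg⟩ hgW y (Set.mem_iInter₂.mp hy f hft)
  have h2 : |g x - (f : C(X, ℝ)) x| < ε / 2 :=
    hWV f ⟨g, hg⟩ hgW x (mem_of_mem_nhds (hV f))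
  have h3 : |g y - g x| ≤ |g y - (f : C(X, ℝ)) x| + |(f : C(X, ℝ)) x - g x| :=
    abs_sub_le _ _ _
  rw [abs_sub_comm ((f : C(X, ℝ)) x) (g x)] at h3
  linarith

/-- Arzelà–Ascoli: an equicontinuous pointwise bounded set has compact closure in `C_k(X)`. -/
lemma isCompact_closure_of_equicont {A : Set C(X, ℝ)}
    (hAe : EquicontinuousSet X A) (hAb : PointwiseBoundedSet X A) :
    IsCompact (closure A) := by
  classical
  choose M hM using hAb
  set A' : Set (X → ℝ) := ContinuousMap.toFun '' A with hA'def
  have hAe' : Equicontinuous ((↑) : A' → X → ℝ) := by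
    intro x
    rw [Metric.equicontinuousAt_iff_right]
    intro ε hε
    obtain ⟨Vx, hVx, h⟩ := hAe x ε hε
    filter_upwards [hVx] with y hy i
    obtain ⟨f, hf, hfi⟩ := i.2
    rw [Real.dist_eq, abs_sub_comm, ← hfi]
    exact h f hf y hy
  set P : Set (X → ℝ) := closure A' with hPdef
  have hPe : Equicontinuous ((↑) : P → X → ℝ) := Set.Equicontinuous.closure hAe'
  have hQc : IsCompact (Set.pi Set.univ fun x => Set.Icc (-(M x)) (M x)) :=
    isCompact_univ_pi fun x => isCompact_Icc
  have hQcl : IsClosed (Set.pi Set.univ fun x => Set.Icc (-(M x)) (M x)) :=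
    isClosed_set_pi fun x _ => isClosed_Icc
  have hsub : A' ⊆ Set.pi Set.univ fun x => Set.Icc (-(M x)) (M x) := by
    rintro g ⟨f, hf, rfl⟩ x _
    exact abs_le.mp (hM x f hf)
  have hPc : IsCompact P := hQc.of_isClosed_subset isClosed_closure
    (closure_minimal hsub hQcl)
  set S : Set C(X, ℝ) := ContinuousMap.toFun ⁻¹' P with hSdef
  have himg : ContinuousMap.toFun '' S = P := by
    refine Set.Subset.antisymm (Set.image_preimage_subset _ _) ?_
    intro g hg
    have hgc : Continuous g := hPe.continuous ⟨g, hg⟩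
    exact ⟨⟨g, hgc⟩, hg, rfl⟩
  have hSe : Equicontinuous ((↑) : S → X → ℝ) := by
    intro x U hU
    filter_upwards [hPe x U hU] with y hy i
    exact hy ⟨ContinuousMap.toFun i.1, i.2⟩
  have hScpt : IsCompact S :=
    ArzelaAscoli.isCompact_of_equicontinuous S (himg ▸ hPc) hSe
  have hScl : IsClosed S := hPc.isClosed.preimage continuous_coeFun
  exact hScpt.of_isClosed_subset isClosed_closure
    (closure_minimal (fun f hf => subset_closure (Set.mem_image_of_mem _ hf)) hScl)

lemma polar_mem_tauE {A : Set C(X, ℝ)} (hAe : EquicontinuousSet X A)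
    (hAb : PointwiseBoundedSet X A) :
    {μ : C(X, ℝ) →L[ℝ] ℝ | ∀ f ∈ A, |μ f| ≤ 1} ∈ tauENhdsZero X :=
  Filter.mem_generate_of_mem ⟨A, hAe, hAb, rfl⟩

lemma equicont_union {A B : Set C(X, ℝ)} (h1 : EquicontinuousSet X A)
    (h2 : EquicontinuousSet X B) : EquicontinuousSet X (A ∪ B) := by
  intro x ε hε
  obtain ⟨V1, hV1, hA⟩ := h1 x ε hε
  obtain ⟨V2, hV2, hB⟩ := h2 x ε hε
  exact ⟨V1 ∩ V2, Filter.inter_mem hV1 hV2,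
    fun f hf y hy => hf.elim (fun h => hA f h y hy.1) (fun h => hB f h y hy.2)⟩

lemma ptbdd_union {A B : Set C(X, ℝ)} (h1 : PointwiseBoundedSet X A)
    (h2 : PointwiseBoundedSet X B) : PointwiseBoundedSet X (A ∪ B) := by
  intro x
  obtain ⟨M1, hM1⟩ := h1 x
  obtain ⟨M2, hM2⟩ := h2 x
  exact ⟨max M1 M2, fun f hf => hf.elim
    (fun h => le_trans (hM1 f h) (le_max_left _ _))
    (fun h => le_trans (hM2 f h) (le_max_right _ _))⟩

/-- Every `τ_e`-neighborhood of `0` contains the polar of an equicontinuous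
pointwise bounded set. -/
lemma exists_polar_subset {U : Set (C(X, ℝ) →L[ℝ] ℝ)} (hU : U ∈ tauENhdsZero X) :
    ∃ A : Set C(X, ℝ), EquicontinuousSet X A ∧ PointwiseBoundedSet X A ∧
      {μ : C(X, ℝ) →L[ℝ] ℝ | ∀ f ∈ A, |μ f| ≤ 1} ⊆ U := by
  rw [tauENhdsZero, Filter.mem_generate_iff] at hU
  obtain ⟨t, htsub, htfin, htU⟩ := hU
  suffices h : ∃ A : Set C(X, ℝ), EquicontinuousSet X A ∧ PointwiseBoundedSet X A ∧
      {μ : C(X, ℝ) →L[ℝ] ℝ | ∀ f ∈ A, |μ f| ≤ 1} ⊆ ⋂₀ t by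
    obtain ⟨A, h1, h2, h3⟩ := h
    exact ⟨A, h1, h2, h3.trans htU⟩
  clear htU
  revert htsub
  refine Set.Finite.induction_on
    (motive := fun t _ => t ⊆ {S | ∃ A : Set C(X, ℝ), EquicontinuousSet X A ∧
        PointwiseBoundedSet X A ∧
        S = {μ : C(X, ℝ) →L[ℝ] ℝ | ∀ f ∈ A, |μ f| ≤ 1}} →
      ∃ A : Set C(X, ℝ), EquicontinuousSet X A ∧ PointwiseBoundedSet X A ∧
        {μ : C(X, ℝ) →L[ℝ] ℝ | ∀ f ∈ A, |μ f| ≤ 1} ⊆ ⋂₀ t) t htfin ?_ ?_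
  · exact fun _ => ⟨∅, fun x ε hε => ⟨Set.univ, Filter.univ_mem, by simp⟩,
      fun x => ⟨0, by simp⟩, by simp⟩
  · intro a s ha hs ih htsub
    obtain ⟨A2, h2e, h2b, h2sub⟩ := ih ((Set.subset_insert a s).trans htsub)
    obtain ⟨A1, h1e, h1b, h1eq⟩ := htsub (Set.mem_insert a s)
    refine ⟨A1 ∪ A2, equicont_union h1e h2e, ptbdd_union h1b h2b, ?_⟩
    rw [Set.sInter_insert]
    refine Set.subset_inter ?_ ?_
    · intro μ hμ
      rw [h1eq]
      exact fun f hf => hμ f (Set.mem_union_left _ hf)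
    · exact fun μ hμ => h2sub (fun f hf => hμ f (Set.mem_union_right _ hf))

/-- The polar (in `C(X,ℝ)`) of a set of functionals containing the polar of an
equicontinuous set is equicontinuous. -/
lemma equicont_polar_polar {A : Set C(X, ℝ)} {U : Set (C(X, ℝ) →L[ℝ] ℝ)}
    (hAe : EquicontinuousSet X A)
    (hsub : {μ : C(X, ℝ) →L[ℝ] ℝ | ∀ g ∈ A, |μ g| ≤ 1} ⊆ U) :
    EquicontinuousSet X {f : C(X, ℝ) | ∀ μ ∈ U, |μ f| ≤ 1} := by
  intro x ε hε
  obtain ⟨V, hV, h⟩ := hAe x (ε / 2) (half_pos hε)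
  refine ⟨V, hV, fun f hf y hy => ?_⟩
  have key : ∀ h : C(X, ℝ) →L[ℝ] ℝ, (∀ g : C(X, ℝ), |h g| ≤ |g y - g x|) →
      |h f| ≤ ε / 2 := by
    intro h0 hh0
    have hμmem : ((ε / 2)⁻¹ • h0) ∈ U := by
      apply hsub
      intro g hg
      have hle : |((ε / 2)⁻¹ • h0) g| ≤ (ε / 2)⁻¹ * |g y - g x| := by
        rw [ContinuousLinearMap.smul_apply, smul_eq_mul, abs_mul,
          abs_of_pos (inv_pos.mpr (half_pos hε))]
        exact mul_le_mul_of_nonneg_left (hh0 g) (le_of_lt (inv_pos.mpr (half_pos hε)))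
      calc |((ε / 2)⁻¹ • h0) g| ≤ (ε / 2)⁻¹ * |g y - g x| := hle
        _ ≤ (ε / 2)⁻¹ * (ε / 2) :=
          mul_le_mul_of_nonneg_left (le_of_lt (h g hg y hy))
            (le_of_lt (inv_pos.mpr (half_pos hε)))
        _ = 1 := inv_mul_cancel₀ (ne_of_gt (half_pos hε))
    have := hf _ hμmem
    rw [ContinuousLinearMap.smul_apply, smul_eq_mul, abs_mul,
      abs_of_pos (inv_pos.mpr (half_pos hε))] at this
    have h4 := mul_le_mul_of_nonneg_left this (le_of_lt (half_pos hε))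
    rw [← mul_assoc, mul_inv_cancel₀ (ne_of_gt (half_pos hε)), one_mul, mul_one] at h4
    exact h4
  have := key (diracCLM y - diracCLM x) (by intro g; simp)
  simp only [ContinuousLinearMap.sub_apply, diracCLM_apply] at this
  linarith [half_lt_self hε]

lemma ptbdd_polar_polar {A : Set C(X, ℝ)} {U : Set (C(X, ℝ) →L[ℝ] ℝ)}
    (hAb : PointwiseBoundedSet X A)
    (hsub : {μ : C(X, ℝ) →L[ℝ] ℝ | ∀ g ∈ A, |μ g| ≤ 1} ⊆ U) :
    PointwiseBoundedSet X {f : C(X, ℝ) | ∀ μ ∈ U, |μ f| ≤ 1} := by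
  intro x
  obtain ⟨M, hM⟩ := hAb x
  set M' : ℝ := max M 1 with hM'def
  have hM'pos : 0 < M' := lt_of_lt_of_le one_pos (le_max_right _ _)
  refine ⟨M', fun f hf => ?_⟩
  have hμmem : (M'⁻¹ • diracCLM x) ∈ U := by
    apply hsub
    intro g hg
    rw [ContinuousLinearMap.smul_apply, smul_eq_mul, diracCLM_apply, abs_mul,
      abs_of_pos (inv_pos.mpr hM'pos)]
    calc M'⁻¹ * |g x| ≤ M'⁻¹ * M' :=
        mul_le_mul_of_nonneg_left ((hM g hg).trans (le_max_left _ _))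
          (le_of_lt (inv_pos.mpr hM'pos))
      _ = 1 := inv_mul_cancel₀ (ne_of_gt hM'pos)
  have := hf _ hμmem
  rw [ContinuousLinearMap.smul_apply, smul_eq_mul, diracCLM_apply, abs_mul,
    abs_of_pos (inv_pos.mpr hM'pos)] at this
  have h4 := mul_le_mul_of_nonneg_left this (le_of_lt hM'pos)
  rw [← mul_assoc, mul_inv_cancel₀ (ne_of_gt hM'pos), one_mul, mul_one] at h4
  exact h4

lemma equicont_singleton (f : C(X, ℝ)) : EquicontinuousSet X {f} := by
  intro x ε hε
  refine ⟨f ⁻¹' Metric.ball (f x) ε,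
    f.continuous.continuousAt.preimage_mem_nhds (Metric.ball_mem_nhds _ hε), ?_⟩
  intro g hg y hy
  rw [Set.mem_singleton_iff] at hg
  subst hg
  simpa [Real.dist_eq] using hy

lemma ptbdd_singleton (f : C(X, ℝ)) : PointwiseBoundedSet X {f} := by
  intro x
  exact ⟨|f x|, fun g hg => by rw [Set.mem_singleton_iff] at hg; subst hg; exact le_refl _⟩

end Aux

/-- For an Ascoli space `X`, the dual `E'` of `C_k(X)` endowed
with the topology `τ_e` has a G-base of neighborhoods of `0` iff `C_k(X)` has
a compact resolution swallowing the compact sets of `C_k(X)`. -/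
theorem statement16 (X : Type*) [TopologicalSpace X] [T35Space X]
    (hX : AscoliSpace X) :
    (∃ U : (ℕ → ℕ) → Set (C(X, ℝ) →L[ℝ] ℝ),
        (∀ α, U α ∈ tauENhdsZero X) ∧
        (∀ α β : ℕ → ℕ, α ≤ β → U β ⊆ U α) ∧
        ∀ V ∈ tauENhdsZero X, ∃ α, U α ⊆ V) ↔
      CompactResolutionSwallowing C(X, ℝ) := by
  constructor
  · rintro ⟨U, hUmem, hUanti, hUbase⟩
    choose A hAe hAb hApol using fun α => exists_polar_subset (hUmem α)
    refine ⟨fun α => {f : C(X, ℝ) | ∀ μ ∈ U α, |μ f| ≤ 1}, ⟨fun α => ?_, ?_, ?_⟩, ?_⟩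
    · -- compactness of each `K α`
      have hKe := equicont_polar_polar (hAe α) (hApol α)
      have hKb := ptbdd_polar_polar (hAb α) (hApol α)
      have hKcl : IsClosed {f : C(X, ℝ) | ∀ μ ∈ U α, |μ f| ≤ 1} := by
        have : {f : C(X, ℝ) | ∀ μ ∈ U α, |μ f| ≤ 1} =
            ⋂ μ ∈ U α, {f : C(X, ℝ) | |μ f| ≤ 1} := by
          ext f; simp [Set.mem_iInter]
        rw [this]
        exact isClosed_biInter fun μ _ =>
          isClosed_le (continuous_abs.comp μ.continuous) continuous_const
      exact (isCompact_closure_of_equicont hKe hKb).of_isClosed_subset hKcl subset_closure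
    · -- cover
      rw [Set.eq_univ_iff_forall]
      intro f
      obtain ⟨α, hα⟩ := hUbase _ (polar_mem_tauE (equicont_singleton f) (ptbdd_singleton f))
      exact Set.mem_iUnion.mpr ⟨α, fun μ hμ => hα hμ f rfl⟩
    · -- monotone
      exact fun α β h f hf μ hμ => hf μ (hUanti α β h hμ)
    · -- swallowing
      intro C hC
      obtain ⟨α, hα⟩ := hUbase _
        (polar_mem_tauE (equicont_of_compact hX hC) (ptbdd_of_compact hC))
      exact ⟨α, fun f hf μ hμ => hα hμ f hf⟩
  · rintro ⟨K, ⟨hKc, hKcov, hKmono⟩, hKsw⟩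
    refine ⟨fun α => {μ : C(X, ℝ) →L[ℝ] ℝ | ∀ f ∈ K α, |μ f| ≤ 1},
      fun α => polar_mem_tauE (equicont_of_compact hX (hKc α)) (ptbdd_of_compact (hKc α)),
      fun α β h μ hμ f hf => hμ f (hKmono α β h hf), ?_⟩
    intro V hV
    obtain ⟨A, hAe, hAb, hApol⟩ := exists_polar_subset hV
    obtain ⟨α, hα⟩ := hKsw (closure A) (isCompact_closure_of_equicont hAe hAb)
    exact ⟨α, fun μ hμ => hApol fun f hf => hμ f (hα (subset_closure hf))⟩
end
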